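/- arXiv:1604.05551 — 8 statements merged into one kernel-verified Lean document; each statement's English description precedes it below -/
import Mathlib

section
/- Let U : S(ℝⁿ) → S(ℝⁿ) be a map satisfying U(f·g) = U(f)·U(g) for all f, g ∈ S(ℝⁿ). If f, g ∈ S(ℝⁿ) and g(x) = 1 for every x in the support of f, then Ug(y) = 1 for every y in the support of Uf. -/
open MeasureTheory SchwartzMap

theorem mul_eq_self_of_eq_one_on_tsupport {X M₀ : Type*} [TopologicalSpace X]
    [MulZeroOneClass M₀] {f g : X → M₀} (hg : ∀ x ∈ tsupport f, g x = 1) (x : X) :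
    f x = f x * g x := by
  by_cases hx : x ∈ tsupport f
  · rw [hg x hx, mul_one]
  · rw [image_eq_zero_of_notMem_tsupport hx, zero_mul]

theorem tsupport_subset_setOf_eq_one_of_mul_eq_self {X M₀ : Type*} [TopologicalSpace X]
    [MulZeroOneClass M₀] [IsLeftCancelMulZero M₀] [TopologicalSpace M₀] [T1Space M₀]
    {f g : X → M₀} (hg : Continuous g) (hfg : ∀ x, f x = f x * g x) :
    tsupport f ⊆ {x | g x = 1} :=
  closure_minimal (fun x hx => (mul_eq_left₀ hx).mp (hfg x).symm)
    (isClosed_singleton.preimage hg)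

theorem stmt_2 (n : ℕ)
    (U : SchwartzMap (EuclideanSpace ℝ (Fin n)) ℂ → SchwartzMap (EuclideanSpace ℝ (Fin n)) ℂ)
    (h2 : ∀ f g h : SchwartzMap (EuclideanSpace ℝ (Fin n)) ℂ,
      (∀ x, h x = f x * g x) → ∀ x, U h x = U f x * U g x)
    (f g : SchwartzMap (EuclideanSpace ℝ (Fin n)) ℂ)
    (hg : ∀ x ∈ tsupport ⇑f, g x = 1) :
    ∀ y ∈ tsupport ⇑(U f), U g y = 1 :=
  tsupport_subset_setOf_eq_one_of_mul_eq_self (U g).continuous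
    (h2 f g f (mul_eq_self_of_eq_one_on_tsupport hg))
end

section
/- Let U : S(ℝⁿ) → S(ℝⁿ) be a map satisfying U(f·g) = U(f)·U(g) for all f, g ∈ S(ℝⁿ). If f ∈ S(ℝⁿ) is smooth with compact support, then Uf has compact support. -/
/-!
Choose a Schwartz function `χ` equal to `1` on the support of `f`, so that `f = f * χ`. Then
`U f = U f * U χ`, hence `U χ = 1` wherever `U f ≠ 0`; since `U χ` tends to `0` at infinity,
this happens only on a bounded set.
-/

open Filter Set Topology SchwartzMap
open scoped ContDiff

theorem HasCompactSupport.of_eq_mul_of_tendsto_cocompact {X R : Type*}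
    [TopologicalSpace X] [R1Space X]
    [MonoidWithZero R] [IsLeftCancelMulZero R] [Nontrivial R] [TopologicalSpace R] [T1Space R]
    {f g : X → R} (hfg : ∀ x, f x = f x * g x) (hg : Tendsto g (cocompact X) (𝓝 0)) :
    HasCompactSupport f := by
  obtain ⟨K, hK, hKg⟩ := mem_cocompact.1 (hg (compl_singleton_mem_nhds zero_ne_one))
  refine HasCompactSupport.intro hK fun x hx => ?_
  by_contra hfx
  have hgx : g x = 1 := mul_left_cancel₀ hfx (by rw [mul_one, ← hfg x])
  exact hKg hx hgx

theorem exists_schwartzMap_eqOn_one {E F : Type*} [NormedAddCommGroup E] [NormedSpace ℝ E]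
    [FiniteDimensional ℝ E] [NormedRing F] [NormedAlgebra ℝ F] {K : Set E} (hK : IsCompact K) :
    ∃ χ : 𝓢(E, F), EqOn χ 1 K := by
  obtain ⟨R, hR⟩ := hK.isBounded.subset_closedBall 0
  let b : ContDiffBump (0 : E) := ⟨max R 0 + 1, max R 0 + 2, by positivity, by linarith⟩
  have hsmooth : ContDiff ℝ ∞ fun x => b x • (1 : F) := b.contDiff.smul contDiff_const
  refine ⟨(b.hasCompactSupport.smul_right (f' := fun _ => (1 : F))).toSchwartzMap hsmooth,
    fun x hx => ?_⟩
  have hxb : x ∈ Metric.closedBall (0 : E) b.rIn :=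
    Metric.closedBall_subset_closedBall (by simp only [b]; linarith [le_max_left R 0]) (hR hx)
  simp [b.one_of_mem_closedBall hxb]

theorem stmt_3 (n : ℕ)
    (U : SchwartzMap (EuclideanSpace ℝ (Fin n)) ℂ → SchwartzMap (EuclideanSpace ℝ (Fin n)) ℂ)
    (h2 : ∀ f g h : SchwartzMap (EuclideanSpace ℝ (Fin n)) ℂ,
      (∀ x, h x = f x * g x) → ∀ x, U h x = U f x * U g x)
    (f : SchwartzMap (EuclideanSpace ℝ (Fin n)) ℂ)
    (hf : HasCompactSupport ⇑f) :
    HasCompactSupport ⇑(U f) := by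
  obtain ⟨χ, hχ⟩ := exists_schwartzMap_eqOn_one (F := ℂ) hf.isCompact
  have hfχ : ∀ x, f x = f x * χ x := fun x => by
    by_cases hx : x ∈ tsupport f
    · rw [hχ hx, Pi.one_apply, mul_one]
    · rw [image_eq_zero_of_notMem_tsupport hx, zero_mul]
  exact .of_eq_mul_of_tendsto_cocompact (h2 f χ f hfχ) (U χ).tendsto_cocompact
end

section
/- Let U : S(ℝⁿ) → S(ℝⁿ) be a bijection satisfying, for all f, g ∈ S(ℝⁿ): (1) U(f + ḡ) = U(f) + conj(U(g)), (2) U(f·g) = U(f)·U(g), (3) U(f ∗ g) = U(f) ∗ U(g). Then for every x₀ ∈ ℝⁿ there exists y₀ ∈ ℝⁿ such that for every f ∈ S(ℝⁿ): if x₀ lies in the support of f, then y₀ lies in the support of Uf. -/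
/-!
A multiplicative bijection `U` of `𝓢(E, ℂ)` preserves the relations `f * g = g` (`f = 1` on the
support of `g`) and `f * g = 0` in both directions. Take bumps `G k` shrinking to `x₀` with
`G k = 1` on the support of `G (k + 1)`. Then `U (G k) = 1` on the support of `U (G (k + 1))`, and
a Schwartz function equals `1` only on a bounded set, so these supports are nested compacts. Their
intersection with `tsupport (U f)` is nonempty whenever `x₀ ∈ tsupport f`, and all points where
every `U (G k)` equals `1` coincide: two distinct ones would yield, by surjectivity, `C` and `D`
with `C x₀ = D x₀ = 1` but `U C * U D = 0`.
-/

open Set Filter Topology Metric Function SchwartzMap Complex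

section PointwiseProduct

variable {X M₀ : Type*} [MulZeroOneClass M₀] {f g : X → M₀}

theorem eqOn_one_tsupport_of_mul_eq [TopologicalSpace X] [TopologicalSpace M₀] [T2Space M₀]
    [IsRightCancelMulZero M₀] (hf : Continuous f) (h : ∀ x, f x * g x = g x) :
    EqOn f 1 (tsupport g) :=
  closure_minimal (fun x hx => (mul_eq_right₀ hx).1 (h x)) (isClosed_eq hf continuous_const)

theorem mul_eq_of_eqOn_one_support (h : EqOn f 1 (support g)) (x : X) : f x * g x = g x := by
  by_cases hx : g x = 0
  · rw [hx, mul_zero]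
  · rw [h hx, Pi.one_apply, one_mul]

theorem exists_mul_ne_zero_of_mem_tsupport [TopologicalSpace X] {x₀ : X} (hx₀ : x₀ ∈ tsupport f)
    (hg : ∀ᶠ x in 𝓝 x₀, g x = 1) : ∃ x, f x * g x ≠ 0 :=
  ((mem_closure_iff_frequently.1 hx₀).and_eventually hg).exists.imp fun _ ⟨hf, hg⟩ => by
    rwa [hg, mul_one]

end PointwiseProduct

section SchwartzSpace

variable {E : Type*} [NormedAddCommGroup E] [NormedSpace ℝ E]

namespace SchwartzMap

noncomputable def pointwiseMul (f g : 𝓢(E, ℂ)) : 𝓢(E, ℂ) := smulLeftCLM ℂ (⇑f) g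

@[simp]
theorem pointwiseMul_apply (f g : 𝓢(E, ℂ)) (x : E) : pointwiseMul f g x = f x * g x :=
  smulLeftCLM_apply_apply f.hasTemperateGrowth g x

theorem isBounded_setOf_eq {F : Type*} [NormedAddCommGroup F] [NormedSpace ℝ F] (f : 𝓢(E, F))
    {c : F} (hc : c ≠ 0) : Bornology.IsBounded {x | f x = c} := by
  obtain ⟨C, -, hC⟩ := f.decay 1 0
  refine (isBounded_closedBall (x := 0) (r := C / ‖c‖)).subset fun x (hx : f x = c) => ?_
  have hx' := hC x
  rw [norm_iteratedFDeriv_zero, hx, pow_one] at hx'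
  rwa [mem_closedBall_zero_iff, le_div_iff₀ (norm_pos_iff.2 hc)]

theorem isCompact_tsupport_of_mul_eq [ProperSpace E] {f g : 𝓢(E, ℂ)}
    (h : ∀ x, f x * g x = g x) : IsCompact (tsupport g) :=
  isCompact_of_isClosed_isBounded (isClosed_tsupport g) <|
    (f.isBounded_setOf_eq one_ne_zero).subset (eqOn_one_tsupport_of_mul_eq f.continuous h)

/-- Cantor's intersection theorem for the nested compact sets `F ∩ tsupport (V (k + 1))`. -/
theorem exists_mem_forall_eq_one_of_mul_succ_eq [ProperSpace E] {V : ℕ → 𝓢(E, ℂ)}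
    (hV : ∀ k x, V k x * V (k + 1) x = V (k + 1) x) {F : Set E} (hF : IsClosed F)
    (hne : ∀ k, (F ∩ support (V k)).Nonempty) : ∃ y ∈ F, ∀ k, V k y = 1 := by
  have hone k : EqOn (V k) 1 (tsupport (V (k + 1))) :=
    eqOn_one_tsupport_of_mul_eq (V k).continuous (hV k)
  obtain ⟨y, hy⟩ := IsCompact.nonempty_iInter_of_sequence_nonempty_isCompact_isClosed
    (fun k => F ∩ tsupport (V (k + 1)))
    (fun k => inter_subset_inter_right F fun x hx => subset_tsupport _ <| by
      rw [mem_support, hone (k + 1) hx]; exact one_ne_zero)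
    (fun k => (hne (k + 1)).mono (inter_subset_inter_right F (subset_tsupport _)))
    ((isCompact_tsupport_of_mul_eq (hV 0)).inter_left hF)
    (fun k => hF.inter (isClosed_tsupport _))
  rw [mem_iInter] at hy
  exact ⟨y, (hy 0).1, fun k => hone k (hy k).2⟩

theorem exists_eqOn_closedBall_support_subset_ball [FiniteDimensional ℝ E] (c : E) {s r : ℝ}
    (hs : 0 < s) (hsr : s < r) :
    ∃ g : 𝓢(E, ℂ), EqOn g 1 (closedBall c s) ∧ support g ⊆ ball c r := by
  let b : ContDiffBump c := ⟨s, r, hs, hsr⟩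
  refine ⟨(b.hasCompactSupport.comp_left ofReal_zero).toSchwartzMap
    (ofRealCLM.contDiff.comp b.contDiff), fun x hx => ?_, fun x hx => ?_⟩
  · change ((b x : ℝ) : ℂ) = 1
    simp [b.one_of_mem_closedBall hx]
  · rw [← b.support_eq]
    exact ofReal_ne_zero.1 hx

end SchwartzMap

structure IsBumpSeqAt (G : ℕ → 𝓢(E, ℂ)) (x₀ : E) : Prop where
  mul_succ : ∀ k x, G k x * G (k + 1) x = G (k + 1) x
  eventually_eq_one : ∀ k, ∀ᶠ x in 𝓝 x₀, G k x = 1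
  exists_support_subset_ball : ∀ ε > 0, ∃ k, support (G k) ⊆ ball x₀ ε

theorem exists_isBumpSeqAt [FiniteDimensional ℝ E] (x₀ : E) : ∃ G, IsBumpSeqAt G x₀ := by
  let ρ (k : ℕ) : ℝ := 1 / (k + 1)
  have hρ (k : ℕ) : 0 < ρ k := by positivity
  have hρ_succ (k : ℕ) : ρ (k + 1) < ρ k :=
    one_div_lt_one_div_of_lt (by positivity) (by push_cast; linarith)
  choose G hG hGsupp using fun k =>
    exists_eqOn_closedBall_support_subset_ball x₀ (hρ (k + 1)) (hρ_succ k)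
  refine ⟨G, fun k => mul_eq_of_eqOn_one_support ((hG k).mono ?_), fun k => ?_, fun ε hε => ?_⟩
  · exact (hGsupp (k + 1)).trans ball_subset_closedBall
  · exact eventually_of_mem (closedBall_mem_nhds x₀ (hρ (k + 1))) (hG k)
  · obtain ⟨k, hk⟩ := exists_nat_one_div_lt hε
    exact ⟨k, (hGsupp k).trans (ball_subset_ball hk.le)⟩

theorem IsBumpSeqAt.mem_tsupport_iff {G : ℕ → 𝓢(E, ℂ)} {x₀ : E} (hG : IsBumpSeqAt G x₀)
    {f : E → ℂ} : x₀ ∈ tsupport f ↔ ∀ k, ∃ x, f x * G k x ≠ 0 := by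
  refine ⟨fun hf k => exists_mul_ne_zero_of_mem_tsupport hf (hG.eventually_eq_one k),
    fun hf => Metric.mem_closure_iff.2 fun ε hε => ?_⟩
  obtain ⟨k, hk⟩ := hG.exists_support_subset_ball ε hε
  obtain ⟨x, hx⟩ := hf k
  exact ⟨x, left_ne_zero_of_mul hx, dist_comm x₀ x ▸ hk (right_ne_zero_of_mul hx)⟩

def PreservesPointwiseMul (U : 𝓢(E, ℂ) → 𝓢(E, ℂ)) : Prop :=
  ∀ f g h : 𝓢(E, ℂ), (∀ x, h x = f x * g x) → ∀ x, U h x = U f x * U g x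

namespace PreservesPointwiseMul

variable {U : 𝓢(E, ℂ) → 𝓢(E, ℂ)} (hU : PreservesPointwiseMul U)
include hU

theorem map_pointwiseMul (f g : 𝓢(E, ℂ)) :
    U (pointwiseMul f g) = pointwiseMul (U f) (U g) :=
  SchwartzMap.ext fun x => by simpa using hU f g _ (pointwiseMul_apply f g) x

theorem map_zero (hsurj : Surjective U) : U 0 = 0 := by
  obtain ⟨f, hf⟩ := hsurj 0
  ext x
  simpa [hf] using hU 0 f 0 (fun x => by simp) x

theorem mul_eq_iff (hinj : Injective U) {f g h : 𝓢(E, ℂ)} :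
    (∀ x, f x * g x = h x) ↔ ∀ z, U f z * U g z = U h z := by
  calc (∀ x, f x * g x = h x) ↔ pointwiseMul f g = h := by simp [SchwartzMap.ext_iff]
    _ ↔ U (pointwiseMul f g) = U h := hinj.eq_iff.symm
    _ ↔ ∀ z, U f z * U g z = U h z := by simp [hU.map_pointwiseMul, SchwartzMap.ext_iff]

theorem exists_mul_ne_zero_iff (hbij : Bijective U) {f g : 𝓢(E, ℂ)} :
    (∃ x, f x * g x ≠ 0) ↔ ∃ z, U f z * U g z ≠ 0 := by
  simpa [hU.map_zero hbij.2] using not_congr (hU.mul_eq_iff hbij.1 (h := 0))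

theorem exists_mem_tsupport_forall_eq_one [ProperSpace E] (hbij : Bijective U)
    {G : ℕ → 𝓢(E, ℂ)} {x₀ : E} (hG : IsBumpSeqAt G x₀) {f : 𝓢(E, ℂ)} (hf : x₀ ∈ tsupport f) :
    ∃ y ∈ tsupport (U f), ∀ k, U (G k) y = 1 := by
  refine exists_mem_forall_eq_one_of_mul_succ_eq
    (fun k => (hU.mul_eq_iff hbij.1).1 (hG.mul_succ k)) (isClosed_tsupport _) fun k => ?_
  obtain ⟨z, hz⟩ := (hU.exists_mul_ne_zero_iff hbij).1 (hG.mem_tsupport_iff.1 hf k)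
  exact ⟨z, subset_tsupport _ (left_ne_zero_of_mul hz), right_ne_zero_of_mul hz⟩

theorem exists_apply_eq_one_support_subset_ball [FiniteDimensional ℝ E] (hbij : Bijective U)
    {G : ℕ → 𝓢(E, ℂ)} {x₀ : E} (hG : IsBumpSeqAt G x₀) {y : E} (hy : ∀ k, U (G k) y = 1)
    {r : ℝ} (hr : 0 < r) : ∃ C, C x₀ = 1 ∧ support (U C) ⊆ ball y r := by
  obtain ⟨c₁, hc₁, hc₁r⟩ := exists_eqOn_closedBall_support_subset_ball y (half_pos hr)
    (half_lt_self hr)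
  obtain ⟨c₂, hc₂, hc₂r⟩ := exists_eqOn_closedBall_support_subset_ball y
    (show 0 < r / 4 by positivity) (show r / 4 < r / 2 by linarith)
  obtain ⟨C₁, rfl⟩ := hbij.2 c₁
  obtain ⟨C₂, rfl⟩ := hbij.2 c₂
  have hC : ∀ x, C₁ x * C₂ x = C₂ x := (hU.mul_eq_iff hbij.1).2 <|
    mul_eq_of_eqOn_one_support (hc₁.mono (hc₂r.trans ball_subset_closedBall))
  have hx₀ : x₀ ∈ tsupport C₂ := hG.mem_tsupport_iff.2 fun k =>
    (hU.exists_mul_ne_zero_iff hbij).2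
      ⟨y, by simp [hy k, hc₂ (mem_closedBall_self (by positivity : 0 ≤ r / 4))]⟩
  exact ⟨C₁, eqOn_one_tsupport_of_mul_eq C₁.continuous hC hx₀, hc₁r⟩

theorem subsingleton_setOf_forall_eq_one [FiniteDimensional ℝ E] (hbij : Bijective U)
    {G : ℕ → 𝓢(E, ℂ)} {x₀ : E} (hG : IsBumpSeqAt G x₀) :
    {y | ∀ k, U (G k) y = 1}.Subsingleton := by
  intro y hy y' hy'
  by_contra hne
  have hr : 0 < dist y y' / 2 := half_pos (dist_pos.2 hne)
  obtain ⟨C, hC, hCy⟩ := hU.exists_apply_eq_one_support_subset_ball hbij hG hy hr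
  obtain ⟨D, hD, hDy'⟩ := hU.exists_apply_eq_one_support_subset_ball hbij hG hy' hr
  have hdisj : Disjoint (ball y (dist y y' / 2)) (ball y' (dist y y' / 2)) :=
    ball_disjoint_ball (by linarith)
  have hCD : ∀ z, U C z * U D z = U 0 z := fun z => by
    rw [hU.map_zero hbij.2, zero_apply, mul_eq_zero, ← notMem_support, ← notMem_support]
    by_contra! hz
    exact disjoint_left.1 hdisj (hCy hz.1) (hDy' hz.2)
  simpa [hC, hD] using (hU.mul_eq_iff hbij.1).2 hCD x₀

end PreservesPointwiseMul

end SchwartzSpace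

theorem stmt_4_general (n : ℕ)
    (U : SchwartzMap (EuclideanSpace ℝ (Fin n)) ℂ → SchwartzMap (EuclideanSpace ℝ (Fin n)) ℂ)
    (hUbij : Function.Bijective U)
    (h2 : ∀ f g h : SchwartzMap (EuclideanSpace ℝ (Fin n)) ℂ,
      (∀ x, h x = f x * g x) → ∀ x, U h x = U f x * U g x) :
    ∀ x₀ : EuclideanSpace ℝ (Fin n), ∃ y₀ : EuclideanSpace ℝ (Fin n),
      ∀ f : SchwartzMap (EuclideanSpace ℝ (Fin n)) ℂ,
        x₀ ∈ tsupport ⇑f → y₀ ∈ tsupport ⇑(U f) := by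
  intro x₀
  have hU : PreservesPointwiseMul U := h2
  obtain ⟨G, hG⟩ := exists_isBumpSeqAt x₀
  have hx₀ : x₀ ∈ tsupport (G 0) :=
    subset_tsupport _ <| by simp [(hG.eventually_eq_one 0).self_of_nhds]
  obtain ⟨y₀, -, hy₀⟩ := hU.exists_mem_tsupport_forall_eq_one hUbij hG hx₀
  refine ⟨y₀, fun f hf => ?_⟩
  obtain ⟨y, hy, hyG⟩ := hU.exists_mem_tsupport_forall_eq_one hUbij hG hf
  rwa [← hU.subsingleton_setOf_forall_eq_one hUbij hG hyG hy₀]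

theorem stmt_4 (n : ℕ)
    (U : SchwartzMap (EuclideanSpace ℝ (Fin n)) ℂ → SchwartzMap (EuclideanSpace ℝ (Fin n)) ℂ)
    (hUbij : Function.Bijective U)
    (h1 : ∀ f g h : SchwartzMap (EuclideanSpace ℝ (Fin n)) ℂ,
      (∀ x, h x = f x + starRingEnd ℂ (g x)) →
      ∀ x, U h x = U f x + starRingEnd ℂ (U g x))
    (h2 : ∀ f g h : SchwartzMap (EuclideanSpace ℝ (Fin n)) ℂ,
      (∀ x, h x = f x * g x) → ∀ x, U h x = U f x * U g x)
    (h3 : ∀ f g h : SchwartzMap (EuclideanSpace ℝ (Fin n)) ℂ,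
      (∀ x, h x = ∫ y, f (x - y) * g y) →
      ∀ x, U h x = ∫ y, U f (x - y) * U g y) :
    ∀ x₀ : EuclideanSpace ℝ (Fin n), ∃ y₀ : EuclideanSpace ℝ (Fin n),
      ∀ f : SchwartzMap (EuclideanSpace ℝ (Fin n)) ℂ,
        x₀ ∈ tsupport ⇑f → y₀ ∈ tsupport ⇑(U f) :=
  stmt_4_general n U hUbij h2
end

section
/- Let U : S(ℝⁿ) → S(ℝⁿ) be a bijection satisfying, for all f, g ∈ S(ℝⁿ): (1) U(f + ḡ) = U(f) + conj(U(g)), (2) U(f·g) = U(f)·U(g), (3) U(f ∗ g) = U(f) ∗ U(g). Then there exists a bijection A : ℝⁿ → ℝⁿ such that for every f ∈ S(ℝⁿ), the image A(supp f) of the support of f under A equals the support of Uf. -/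
open MeasureTheory SchwartzMap Complex Metric Function Set Manifold
set_option linter.unusedSectionVars false
set_option maxHeartbeats 1000000




noncomputable section Aux

variable {E : Type*} [NormedAddCommGroup E] [InnerProductSpace ℝ E] [FiniteDimensional ℝ E]

/-- Constructor for Schwartz maps from smooth compactly supported functions. -/
def mkCS (f : E → ℂ) (hsm : ContDiff ℝ (⊤ : ℕ∞) f) (hcs : HasCompactSupport f) : 𝓢(E, ℂ) where
  toFun := f
  smooth' := hsm
  decay' := by
    intro k m
    have hder : Continuous (fun x => iteratedFDeriv ℝ m f x) :=
      (hsm.of_le (by exact_mod_cast le_top)).continuous_iteratedFDeriv (le_refl _)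
    have hcont : Continuous (fun x => ‖x‖ ^ k * ‖iteratedFDeriv ℝ m f x‖) :=
      (continuous_norm.pow k).mul hder.norm
    have hcs2 : HasCompactSupport (fun x => ‖x‖ ^ k * ‖iteratedFDeriv ℝ m f x‖) :=
      HasCompactSupport.mul_left ((hcs.iteratedFDeriv m).norm)
    obtain ⟨C, hC⟩ := hcont.bounded_above_of_compact_support hcs2
    refine ⟨C, fun x => ?_⟩
    have := hC x
    rwa [Real.norm_eq_abs, _root_.abs_of_nonneg (by positivity)] at this

@[simp] lemma mkCS_apply (f : E → ℂ) (hsm hcs) (x : E) : mkCS f hsm hcs x = f x := rfl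

/-- Complex conjugation of a Schwartz map. -/
def conjS (f : 𝓢(E, ℂ)) : 𝓢(E, ℂ) where
  toFun := fun x => (starRingEnd ℂ) (f x)
  smooth' := by
    have : (fun x => (starRingEnd ℂ) (f x)) = (⇑Complex.conjLIE) ∘ ⇑f := rfl
    rw [this]
    exact (Complex.conjLIE.contDiff).comp f.smooth'
  decay' := by
    intro k m
    obtain ⟨C, hC⟩ := f.decay' k m
    refine ⟨C, fun x => ?_⟩
    have heq : iteratedFDeriv ℝ m (fun x => (starRingEnd ℂ) (f x)) x
        = iteratedFDeriv ℝ m ((⇑Complex.conjLIE) ∘ ⇑f) x := rfl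
    rw [heq, Complex.conjLIE.norm_iteratedFDeriv_comp_left]
    exact hC x

@[simp] lemma conjS_apply (f : 𝓢(E, ℂ)) (x : E) : conjS f x = (starRingEnd ℂ) (f x) := rfl

lemma schwartz_hasTemperateGrowth (f : 𝓢(E, ℂ)) : Function.HasTemperateGrowth ⇑f := by
  refine ⟨f.smooth', fun m => ⟨0, SchwartzMap.seminorm ℝ 0 m f, fun x => ?_⟩⟩
  simpa using f.norm_iteratedFDeriv_le_seminorm ℝ m x

/-- Pointwise product of Schwartz maps. -/
def mulS (f g : 𝓢(E, ℂ)) : 𝓢(E, ℂ) :=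
  SchwartzMap.bilinLeftCLM (ContinuousLinearMap.mul ℝ ℂ) (schwartz_hasTemperateGrowth g) f

@[simp] lemma mulS_apply (f g : 𝓢(E, ℂ)) (x : E) : mulS f g x = f x * g x := rfl

/-- Bump functions as (complex-valued) Schwartz maps. -/
def bumpS {c : E} (b : ContDiffBump c) : 𝓢(E, ℂ) :=
  mkCS (fun x => (b x : ℂ))
    (Complex.ofRealCLM.contDiff.comp b.contDiff)
    (b.hasCompactSupport.comp_left (g := fun r : ℝ => (r : ℂ)) (by simp))

@[simp] lemma bumpS_apply {c : E} (b : ContDiffBump c) (x : E) : bumpS b x = (b x : ℂ) := rfl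

end Aux


noncomputable section Aux
variable {E : Type*} [NormedAddCommGroup E] [InnerProductSpace ℝ E] [FiniteDimensional ℝ E]

-- test the bump on ℝ and gluing
def thetaB : ContDiffBump (0:ℝ) := ⟨1/4, 1/3, by norm_num, by norm_num⟩

def Htilde : ℝ → ℝ := fun t => thetaB t * (1 - t)⁻¹

lemma Htilde_smooth : ContDiff ℝ (⊤ : ℕ∞) Htilde := by
  rw [contDiff_iff_contDiffAt]
  intro t
  rcases ne_or_eq t 1 with ht | ht
  · exact (thetaB.contDiffAt).mul (ContDiffAt.inv (contDiffAt_const.sub contDiffAt_id)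
      (sub_ne_zero.mpr (Ne.symm ht)))
  · subst ht
    have hmem : {s : ℝ | s ∉ tsupport ⇑thetaB} ∈ nhds (1:ℝ) := by
      have : (1:ℝ) ∉ tsupport ⇑thetaB := by
        rw [thetaB.tsupport_eq]
        simp [thetaB]
        norm_num
      exact (isOpen_compl_iff.mpr (isClosed_tsupport _)).mem_nhds this
    have : Htilde =ᶠ[nhds (1:ℝ)] (fun _ => 0) := by
      filter_upwards [hmem] with s hs
      have : thetaB s = 0 := image_eq_zero_of_notMem_tsupport hs
      simp [Htilde, this]
    exact ContDiffAt.congr_of_eventuallyEq contDiffAt_const this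

lemma Htilde_cs : HasCompactSupport Htilde := by
  apply HasCompactSupport.mono thetaB.hasCompactSupport
  intro t ht
  by_contra h0
  have : thetaB t = 0 := by simpa using h0
  exact ht (by simp [Htilde, this])

lemma Htilde_eq {t : ℝ} (ht : |t| ≤ 1/4) : Htilde t = (1 - t)⁻¹ := by
  have : thetaB t = 1 := thetaB.one_of_mem_closedBall (by
    simpa [Real.norm_eq_abs, thetaB] using ht)
  simp [Htilde, this]

lemma Htilde_bound (m : ℕ) : ∃ C : ℝ, 0 ≤ C ∧ ∀ i ≤ m, ∀ t : ℝ, ‖iteratedFDeriv ℝ i Htilde t‖ ≤ C := by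
  have key : ∀ i : ℕ, ∃ C : ℝ, ∀ t : ℝ, ‖iteratedFDeriv ℝ i Htilde t‖ ≤ C := by
    intro i
    have hcont : Continuous (fun t => iteratedFDeriv ℝ i Htilde t) :=
      (Htilde_smooth.of_le (by exact_mod_cast le_top)).continuous_iteratedFDeriv (le_refl _)
    obtain ⟨C, hC⟩ := hcont.norm.bounded_above_of_compact_support ((Htilde_cs.iteratedFDeriv i).norm)
    exact ⟨C, fun t => by simpa using hC t⟩
  choose Cs hCs using key
  refine ⟨max 0 ((Finset.range (m+1)).sup' (by simp) Cs), le_max_left _ _, fun i hi t => ?_⟩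
  refine le_trans (hCs i t) (le_trans ?_ (le_max_right _ _))
  exact Finset.le_sup' Cs (Finset.mem_range.mpr (Nat.lt_succ_of_le hi))

end Aux

section W
variable {E : Type*} [NormedAddCommGroup E] [InnerProductSpace ℝ E] [FiniteDimensional ℝ E]

lemma norm_iteratedFDeriv_re_le (v : 𝓢(E, ℂ)) (i : ℕ) (x : E) :
    ‖iteratedFDeriv ℝ i (fun x => (v x).re) x‖ ≤ ‖iteratedFDeriv ℝ i (⇑v) x‖ := by
  have heq : (fun x => (v x).re) = (⇑Complex.reCLM) ∘ ⇑v := rfl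
  rw [heq, Complex.reCLM.iteratedFDeriv_comp_left (x := x) (v.smooth ⊤).contDiffAt (by exact_mod_cast le_top)]
  refine le_trans (Complex.reCLM.norm_compContinuousMultilinearMap_le _) ?_
  have : ‖Complex.reCLM‖ = 1 := Complex.reCLM_norm
  rw [this, one_mul]

/-- Geometric-series solution `w = v/(1-v)` for real-valued small Schwartz `v`. -/
lemma exists_geom (v : 𝓢(E, ℂ)) (hre : ∀ x, v x = ((v x).re : ℂ))
    (hb : ∀ x, ‖v x‖ ≤ 1/4) :
    ∃ w : 𝓢(E, ℂ), ∀ x, w x = v x + w x * v x := by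
  set vR : E → ℝ := fun x => (v x).re with hvR
  have hvRsm : ContDiff ℝ (⊤:ℕ∞) vR := Complex.reCLM.contDiff.comp v.smooth'
  have hvRb : ∀ x, |vR x| ≤ 1/4 := fun x =>
    le_trans (Complex.abs_re_le_norm (v x)) (by simpa using hb x)
  have hne : ∀ x, (1:ℝ) - vR x ≠ 0 := by
    intro x
    have := hvRb x
    have h1 : vR x < 1 := lt_of_le_of_lt (le_of_abs_le this) (by norm_num)
    exact ne_of_gt (by linarith)
  set wR : E → ℝ := fun x => vR x * Htilde (vR x) with hwR
  have hwRval : ∀ x, wR x = vR x * (1 - vR x)⁻¹ := fun x => by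
    rw [hwR]; simp only []; rw [Htilde_eq (hvRb x)]
  have hwRsm : ContDiff ℝ (⊤:ℕ∞) wR := hvRsm.mul (Htilde_smooth.comp hvRsm)
  set wC : E → ℂ := fun x => ((wR x : ℝ) : ℂ) with hwC
  have hwCsm : ContDiff ℝ (⊤:ℕ∞) wC := Complex.ofRealCLM.contDiff.comp hwRsm
  have hdecay : ∀ k m : ℕ, ∃ C : ℝ, ∀ x, ‖x‖ ^ k * ‖iteratedFDeriv ℝ m wC x‖ ≤ C := by
    intro k m
    obtain ⟨CH, hCH0, hCH⟩ := Htilde_bound m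
    -- uniform bound for derivatives of vR
    set D : ℝ := 1 + (Finset.range (m+1)).sup' (by simp) (fun i => SchwartzMap.seminorm ℝ 0 i v) with hD
    have hD1 : (1:ℝ) ≤ D := by
      rw [hD]
      have : (0:ℝ) ≤ (Finset.range (m+1)).sup' (by simp) (fun i => SchwartzMap.seminorm ℝ 0 i v) := by
        refine le_trans (apply_nonneg _ _) (Finset.le_sup' (f := fun i => SchwartzMap.seminorm ℝ 0 i v) (Finset.mem_range.mpr (Nat.succ_pos m)))
      linarith
    have hDb : ∀ i, 1 ≤ i → i ≤ m → ∀ x, ‖iteratedFDeriv ℝ i vR x‖ ≤ D ^ i := by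
      intro i _ him x
      refine le_trans (norm_iteratedFDeriv_re_le v i x) ?_
      refine le_trans (v.norm_iteratedFDeriv_le_seminorm ℝ i x) ?_
      have h1 : SchwartzMap.seminorm ℝ 0 i v ≤ D - 1 := by
        rw [hD]; simp only [add_sub_cancel_left]
        exact Finset.le_sup' (f := fun i => SchwartzMap.seminorm ℝ 0 i v) (Finset.mem_range.mpr (Nat.lt_succ_of_le him))
      calc SchwartzMap.seminorm ℝ 0 i v ≤ D := by linarith
        _ = D ^ 1 := (pow_one D).symm
        _ ≤ D ^ i := pow_le_pow_right₀ hD1 (by omega)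
    -- bound on composition
    have hcomp : ∀ j ≤ m, ∀ x, ‖iteratedFDeriv ℝ j (Htilde ∘ vR) x‖ ≤ (m.factorial : ℝ) * CH * D ^ m := by
      intro j hj x
      have h := norm_iteratedFDeriv_comp_le (n := j) (N := (⊤:ℕ∞))
        Htilde_smooth hvRsm (by exact_mod_cast le_top) x
        (C := CH) (D := D)
        (fun i hi => hCH i (le_trans hi hj) (vR x))
        (fun i h1i hij => hDb i h1i (le_trans hij hj) x)
      refine le_trans h ?_
      have h1 : (j.factorial : ℝ) ≤ (m.factorial : ℝ) := by
        exact_mod_cast Nat.factorial_le (by omega)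
      have h2 : D ^ j ≤ D ^ m := pow_le_pow_right₀ hD1 (by omega)
      have hD0 : (0:ℝ) ≤ D ^ j := by positivity
      calc (j.factorial : ℝ) * CH * D ^ j ≤ (m.factorial : ℝ) * CH * D ^ j := by
            apply mul_le_mul_of_nonneg_right _ hD0
            exact mul_le_mul_of_nonneg_right h1 hCH0
        _ ≤ (m.factorial : ℝ) * CH * D ^ m := by
            apply mul_le_mul_of_nonneg_left h2
            positivity
    -- final bound
    refine ⟨∑ i ∈ Finset.range (m+1), (m.choose i : ℝ) * (SchwartzMap.seminorm ℝ k i v) * ((m.factorial : ℝ) * CH * D ^ m), fun x => ?_⟩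
    have hiso : ‖iteratedFDeriv ℝ m wC x‖ = ‖iteratedFDeriv ℝ m wR x‖ := by
      have heq : wC = (⇑Complex.ofRealLI) ∘ wR := rfl
      rw [heq, Complex.ofRealLI.norm_iteratedFDeriv_comp_left (n := (⊤:ℕ∞)) (x := x) hwRsm.contDiffAt (by exact_mod_cast le_top)]
    rw [hiso]
    have hmul := norm_iteratedFDeriv_mul_le (𝕜 := ℝ) (A := ℝ) hvRsm (Htilde_smooth.comp hvRsm) x
      (n := m) (by exact_mod_cast le_top)
    have hwr : wR = fun y => vR y * (Htilde ∘ vR) y := rfl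
    have hxk : (0:ℝ) ≤ ‖x‖ ^ k := by positivity
    calc ‖x‖ ^ k * ‖iteratedFDeriv ℝ m wR x‖
        ≤ ‖x‖ ^ k * ∑ i ∈ Finset.range (m + 1), (m.choose i : ℝ) * ‖iteratedFDeriv ℝ i vR x‖ * ‖iteratedFDeriv ℝ (m - i) (Htilde ∘ vR) x‖ :=
          mul_le_mul_of_nonneg_left (by exact hmul) hxk
      _ = ∑ i ∈ Finset.range (m + 1), (m.choose i : ℝ) * (‖x‖ ^ k * ‖iteratedFDeriv ℝ i vR x‖) * ‖iteratedFDeriv ℝ (m - i) (Htilde ∘ vR) x‖ := by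
          rw [Finset.mul_sum]; congr 1; ext i; ring
      _ ≤ ∑ i ∈ Finset.range (m+1), (m.choose i : ℝ) * (SchwartzMap.seminorm ℝ k i v) * ((m.factorial : ℝ) * CH * D ^ m) := by
          refine Finset.sum_le_sum fun i hi => ?_
          have hi' : i ≤ m := Nat.lt_succ_iff.mp (Finset.mem_range.mp hi)
          have hb1 : ‖x‖ ^ k * ‖iteratedFDeriv ℝ i vR x‖ ≤ SchwartzMap.seminorm ℝ k i v := by
            refine le_trans (mul_le_mul_of_nonneg_left (norm_iteratedFDeriv_re_le v i x) hxk) ?_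
            exact v.le_seminorm ℝ k i x
          have hb2 : ‖iteratedFDeriv ℝ (m - i) (Htilde ∘ vR) x‖ ≤ (m.factorial : ℝ) * CH * D ^ m :=
            hcomp (m - i) (by omega) x
          have h0a : (0:ℝ) ≤ (m.choose i : ℝ) := by positivity
          have h0b : (0:ℝ) ≤ ‖x‖ ^ k * ‖iteratedFDeriv ℝ i vR x‖ := by positivity
          have h0c : (0:ℝ) ≤ ‖iteratedFDeriv ℝ (m-i) (Htilde ∘ vR) x‖ := norm_nonneg _
          apply mul_le_mul
          · exact mul_le_mul_of_nonneg_left hb1 h0a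
          · exact hb2
          · exact h0c
          · positivity
  refine ⟨⟨wC, hwCsm, fun k m => ?_⟩, fun x => ?_⟩
  · obtain ⟨C, hC⟩ := hdecay k m
    exact ⟨C, hC⟩
  · show wC x = v x + wC x * v x
    rw [hwC]
    simp only []
    rw [hwRval x, hre x]
    have h : ((1:ℂ) - ((vR x : ℝ) : ℂ)) ≠ 0 := by
      intro hc
      apply hne x
      have := congrArg Complex.re hc
      simpa using this
    push_cast
    field_simp
    ring
end W
noncomputable section Cutoff
variable {E : Type*} [NormedAddCommGroup E] [InnerProductSpace ℝ E] [FiniteDimensional ℝ E]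



lemma exists_cutoff {K O : Set E} (hK : IsCompact K) (hO : IsOpen O) (hKO : K ⊆ O) :
    ∃ ψ : E → ℝ, ContDiff ℝ (⊤:ℕ∞) ψ ∧ HasCompactSupport ψ ∧
      (∀ y, ψ y ∈ Icc (0:ℝ) 1) ∧ (∀ y ∈ K, ψ y = 1) ∧ tsupport ψ ⊆ O := by
  obtain ⟨L, hLc, hKL, hLO⟩ := exists_compact_between hK hO hKO
  obtain ⟨f, hf0, hf1, hf01⟩ := exists_contMDiffMap_zero_one_of_isClosed (𝓘(ℝ, E)) (n := (⊤ : ℕ∞))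
    (isClosed_compl_iff.mpr isOpen_interior) hK.isClosed
    (disjoint_compl_left_iff.mpr hKL)
  refine ⟨f, ?_, ?_, hf01, fun y hy => hf1 hy, ?_⟩
  · exact contMDiff_iff_contDiff.mp f.contMDiff
  · apply HasCompactSupport.of_support_subset_isCompact hLc
    intro y hy
    by_contra hyL
    exact hy (hf0 (fun h => hyL (interior_subset h)))
  · have h1 : support ⇑f ⊆ interior L := by
      intro y hy
      by_contra hyL
      exact hy (hf0 hyL)
    refine subset_trans (closure_mono h1) (subset_trans ?_ hLO)
    rw [hLc.isClosed.closure_subset_iff]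
    exact interior_subset
end Cutoff
noncomputable section Char
variable {E : Type*} [NormedAddCommGroup E] [InnerProductSpace ℝ E] [FiniteDimensional ℝ E]

lemma mulS_comm (f g : 𝓢(E, ℂ)) : mulS f g = mulS g f :=
  SchwartzMap.ext fun x => mul_comm _ _

/-- A linear multiplicative star character on Schwartz space is a point evaluation. -/
lemma char_linear {χ : 𝓢(E, ℂ) → ℂ}
    (hadd : ∀ f g, χ (f + g) = χ f + χ g)
    (hmul : ∀ f g, χ (mulS f g) = χ f * χ g)
    (hstar : ∀ f, χ (conjS f) = starRingEnd ℂ (χ f))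
    (hlin : ∀ (c : ℂ) (f : 𝓢(E, ℂ)), χ (c • f) = c * χ f)
    {F : 𝓢(E, ℂ)} (hF : χ F ≠ 0) :
    ∃ x : E, ∀ f, χ f = f x := by
  have hzero : χ 0 = 0 := by
    have h := hadd 0 0
    rw [add_zero] at h
    linear_combination -h
  have hsub : ∀ f g, χ (f - g) = χ f - χ g := by
    intro f g
    have h := hadd (f - g) g
    rw [sub_add_cancel] at h
    linear_combination -h
  set r : ℝ := Complex.normSq (χ F) with hr
  have hrpos : 0 < r := Complex.normSq_pos.mpr hF
  set F₁ : 𝓢(E, ℂ) := mulS F (conjS F) with hF₁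
  have hχF₁ : χ F₁ = (r : ℂ) := by
    rw [hF₁, hmul, hstar, Complex.mul_conj]
  have hF₁val : ∀ y, F₁ y = ((Complex.normSq (F y) : ℝ) : ℂ) := by
    intro y
    rw [hF₁, mulS_apply, conjS_apply, Complex.mul_conj]
  set u : 𝓢(E, ℂ) := ((r : ℂ))⁻¹ • F₁ with hu
  have hrne : (r : ℂ) ≠ 0 := by
    simpa using ne_of_gt hrpos
  have hχu : χ u = 1 := by
    rw [hu, hlin, hχF₁]
    field_simp
  have huval : ∀ y, u y = ((r⁻¹ * Complex.normSq (F y) : ℝ) : ℂ) := by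
    intro y
    rw [hu, SchwartzMap.smul_apply, hF₁val, smul_eq_mul]
    push_cast
    ring
  have hure : ∀ y, u y = (((u y).re : ℝ) : ℂ) := by
    intro y
    rw [huval]
    simp
  -- Claim: the kernel of χ has a common zero.
  have hker : ∃ x : E, ∀ f, χ f = 0 → f x = 0 := by
    by_contra hcon
    push_neg at hcon
    choose g hg0 hgx using hcon
    set q : E → 𝓢(E, ℂ) := fun x => mulS (g x) (conjS (g x)) with hq
    have hqval : ∀ x y, q x y = ((Complex.normSq (g x y) : ℝ) : ℂ) := by
      intro x y
      rw [hq]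
      simp only [mulS_apply, conjS_apply]
      rw [Complex.mul_conj]
    have hχq : ∀ x, χ (q x) = 0 := by
      intro x
      rw [hq]
      simp only []
      rw [hmul, hg0, zero_mul]
    set K : Set E := {y | 1/4 ≤ ‖u y‖} with hK
    have hKclosed : IsClosed K := isClosed_le continuous_const (continuous_norm.comp u.continuous)
    set C1 : ℝ := SchwartzMap.seminorm ℝ 1 0 u with hC1
    have hKsub : K ⊆ closedBall 0 (4 * C1) := by
      intro y hy
      have h1 : ‖y‖ * ‖u y‖ ≤ C1 := by
        have h2 := u.le_seminorm ℝ 1 0 y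
        simpa [norm_iteratedFDeriv_zero, pow_one] using h2
      have h2 : (1:ℝ)/4 ≤ ‖u y‖ := hy
      rw [mem_closedBall, dist_zero_right]
      nlinarith [norm_nonneg y, norm_nonneg (u y)]
    have hKcomp : IsCompact K :=
      (isCompact_closedBall (0:E) (4*C1)).of_isClosed_subset hKclosed hKsub
    set Uo : E → Set E := fun x => {y | 0 < (q x y).re} with hUo
    have hUopen : ∀ x, IsOpen (Uo x) := fun x =>
      isOpen_lt continuous_const (Complex.continuous_re.comp (q x).continuous)
    have hKcover : K ⊆ ⋃ x, Uo x := by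
      intro y _
      refine mem_iUnion.mpr ⟨y, ?_⟩
      show 0 < (q y y).re
      rw [hqval]
      simpa using Complex.normSq_pos.mpr (hgx y)
    obtain ⟨sfin, hsfin⟩ := hKcomp.elim_finite_subcover Uo hUopen hKcover
    set h : 𝓢(E, ℂ) := ∑ x ∈ sfin, q x with hh
    have hχh : χ h = 0 := by
      have h1 : χ h = ∑ x ∈ sfin, χ (q x) := by
        rw [hh]
        exact map_sum (AddMonoidHom.mk' χ hadd) q sfin
      rw [h1]
      exact Finset.sum_eq_zero fun x _ => hχq x
    have hhapp : ∀ y, h y = ∑ x ∈ sfin, q x y := by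
      intro y
      have h1 : ⇑h = ∑ x ∈ sfin, ⇑(q x) := by
        rw [hh]
        exact map_sum (FunLike.coeAddMonoidHom 𝓢(E, ℂ) E ℂ) q sfin
      rw [h1]
      exact Finset.sum_apply y sfin fun x => ⇑(q x)
    have hhre : ∀ y, (h y).re = ∑ x ∈ sfin, Complex.normSq (g x y) := by
      intro y
      rw [hhapp, Complex.re_sum]
      exact Finset.sum_congr rfl fun x _ => by rw [hqval]; simp
    have hhrealval : ∀ y, h y = (((h y).re : ℝ) : ℂ) := by
      intro y
      rw [hhapp]
      rw [Complex.re_sum]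
      push_cast
      exact Finset.sum_congr rfl fun x _ => by rw [hqval]; simp
    set O : Set E := {y | 0 < (h y).re} with hO
    have hOopen : IsOpen O := isOpen_lt continuous_const (Complex.continuous_re.comp h.continuous)
    have hKO : K ⊆ O := by
      intro y hy
      obtain ⟨x, hxf, hxy⟩ := mem_iUnion₂.mp (hsfin hy)
      show 0 < (h y).re
      rw [hhre]
      refine Finset.sum_pos' (fun i _ => Complex.normSq_nonneg _) ⟨x, hxf, ?_⟩
      have h2 : 0 < (q x y).re := hxy
      rwa [hqval, Complex.ofReal_re] at h2
    obtain ⟨ψ, hψsm, hψcs, hψ01, hψK, hψsupp⟩ := exists_cutoff hKcomp hOopen hKO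
    have hψCsm : ContDiff ℝ (⊤:ℕ∞) (fun y : E => ((ψ y : ℝ) : ℂ)) :=
      Complex.ofRealCLM.contDiff.comp hψsm
    have hψCcs : HasCompactSupport (fun y : E => ((ψ y : ℝ) : ℂ)) :=
      hψcs.comp_left (g := fun t : ℝ => (t : ℂ)) (by simp)
    set uψ : 𝓢(E, ℂ) := mkCS (fun y => u y * ((ψ y : ℝ) : ℂ))
      ((u.smooth ⊤).mul hψCsm) (HasCompactSupport.mul_left hψCcs) with huψ
    set qf : E → ℂ := fun y => if 0 < (h y).re then u y * ((ψ y : ℝ) : ℂ) * (h y)⁻¹ else 0 with hqf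
    have hqfz : ∀ y, ψ y = 0 → qf y = 0 := by
      intro y hy0
      simp only [hqf]
      by_cases hzO : 0 < (h y).re
      · rw [if_pos hzO, hy0]
        simp
      · rw [if_neg hzO]
    have hqfsm : ContDiff ℝ (⊤:ℕ∞) qf := by
      rw [contDiff_iff_contDiffAt]
      intro y
      by_cases hy : 0 < (h y).re
      · have hne2 : h y ≠ 0 := by
          intro h0
          rw [h0] at hy
          simp at hy
        have hCD : ContDiffAt ℝ (⊤:ℕ∞) (fun z => u z * ((ψ z : ℝ) : ℂ) * (h z)⁻¹) y :=
          (((u.smooth ⊤).contDiffAt).mul hψCsm.contDiffAt).mul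
            (((h.smooth ⊤).contDiffAt).inv hne2)
        refine hCD.congr_of_eventuallyEq ?_
        filter_upwards [hOopen.mem_nhds hy] with z hz
        simp only [hqf]
        exact if_pos hz
      · have hyO : y ∉ tsupport ψ := fun hmem => hy (hψsupp hmem)
        have hnb : (tsupport ψ)ᶜ ∈ nhds y :=
          (isOpen_compl_iff.mpr (isClosed_tsupport ψ)).mem_nhds hyO
        refine ContDiffAt.congr_of_eventuallyEq (contDiffAt_const (c := (0:ℂ))) ?_
        filter_upwards [hnb] with z hz
        exact hqfz z (image_eq_zero_of_notMem_tsupport hz)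
    have hqfcs : HasCompactSupport qf := by
      apply HasCompactSupport.mono hψcs
      intro y hy
      by_contra h0
      have : ψ y = 0 := by simpa using h0
      exact hy (hqfz y this)
    set qS : 𝓢(E, ℂ) := mkCS qf hqfsm hqfcs with hqS
    have hmulqh : mulS qS h = uψ := by
      refine SchwartzMap.ext fun y => ?_
      show qf y * h y = u y * ((ψ y : ℝ) : ℂ)
      by_cases hy : 0 < (h y).re
      · have hne2 : h y ≠ 0 := by
          intro h0
          rw [h0] at hy
          simp at hy
        simp only [hqf]
        rw [if_pos hy]
        field_simp
      · have hyO : y ∉ tsupport ψ := fun hmem => hy (hψsupp hmem)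
        have hz0 : ψ y = 0 := image_eq_zero_of_notMem_tsupport hyO
        rw [hqfz y hz0, hz0]
        simp
    have hχuψ : χ uψ = 0 := by
      rw [← hmulqh, hmul, hχh, mul_zero]
    set v : 𝓢(E, ℂ) := u - uψ with hv
    have hχv : χ v = 1 := by
      rw [hv, hsub, hχu, hχuψ, sub_zero]
    have hvval : ∀ y, v y = (((r⁻¹ * Complex.normSq (F y)) * (1 - ψ y) : ℝ) : ℂ) := by
      intro y
      rw [hv, SchwartzMap.sub_apply]
      have h1 : uψ y = u y * ((ψ y : ℝ) : ℂ) := rfl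
      rw [h1, huval]
      push_cast
      ring
    have hvre : ∀ y, v y = (((v y).re : ℝ) : ℂ) := by
      intro y
      rw [hvval]
      simp
    have hvbound : ∀ y, ‖v y‖ ≤ 1/4 := by
      intro y
      have hfact : v y = u y * ((1 - ψ y : ℝ) : ℂ) := by
        rw [hvval, huval]
        push_cast
        ring
      by_cases hyK : y ∈ K
      · have h1 : ψ y = 1 := hψK y hyK
        rw [hfact, h1]
        simp
      · have h4 : ‖u y‖ < 1/4 := by
          have : ¬ (1/4 ≤ ‖u y‖) := hyK
          linarith [lt_of_not_ge this]
        have hψy := hψ01 y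
        rw [hfact, norm_mul]
        have h5 : ‖((1 - ψ y : ℝ) : ℂ)‖ ≤ 1 := by
          rw [Complex.norm_real, Real.norm_eq_abs, abs_le]
          constructor <;> [linarith [hψy.2]; linarith [hψy.1]]
        calc ‖u y‖ * ‖((1 - ψ y : ℝ) : ℂ)‖ ≤ (1/4) * 1 := by
              apply mul_le_mul (le_of_lt h4) h5 (norm_nonneg _) (by norm_num)
          _ = 1/4 := by norm_num
    obtain ⟨w, hw⟩ := exists_geom v hvre hvbound
    have hwid : w = v + mulS w v := by
      refine SchwartzMap.ext fun y => ?_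
      rw [SchwartzMap.add_apply, mulS_apply]
      exact hw y
    have hcontra : χ w = 1 + χ w := by
      conv_lhs => rw [hwid]
      rw [hadd, hmul, hχv, mul_one]
    have : (0:ℂ) = 1 := by linear_combination hcontra
    exact zero_ne_one this
  obtain ⟨x, hx⟩ := hker
  have hrep : ∀ f : 𝓢(E, ℂ), f x = χ f * u x := by
    intro f
    have h0 : χ (f - χ f • u) = 0 := by
      rw [hsub, hlin, hχu, mul_one, sub_self]
    have h1 := hx _ h0
    rw [SchwartzMap.sub_apply, SchwartzMap.smul_apply, sub_eq_zero] at h1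
    simpa using h1
  have hbump : ∃ b : 𝓢(E, ℂ), b x = 1 := by
    refine ⟨bumpS (⟨1, 2, one_pos, one_lt_two⟩ : ContDiffBump x), ?_⟩
    rw [bumpS_apply]
    rw [ContDiffBump.one_of_mem_closedBall]
    · norm_num
    · exact mem_closedBall_self (by norm_num)
  have hune : u x ≠ 0 := by
    obtain ⟨b, hb⟩ := hbump
    intro h0
    have h2 := hrep b
    rw [hb, h0, mul_zero] at h2
    exact one_ne_zero h2
  have hux : u x = 1 := by
    have h1 := hrep (mulS u u)
    rw [mulS_apply, hmul, hχu, one_mul] at h1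
    exact mul_right_cancel₀ hune h1
  refine ⟨x, fun f => ?_⟩
  have := hrep f
  rw [hux, mul_one] at this
  exact this.symm

end Char
noncomputable section Char2
variable {E : Type*} [NormedAddCommGroup E] [InnerProductSpace ℝ E] [FiniteDimensional ℝ E]

/-- Any nonzero additive multiplicative star-character on Schwartz space has the
zero set of a point evaluation. -/
lemma char_eval {χ : 𝓢(E, ℂ) → ℂ}
    (hadd : ∀ f g, χ (f + g) = χ f + χ g)
    (hmul : ∀ f g, χ (mulS f g) = χ f * χ g)
    (hstar : ∀ f, χ (conjS f) = starRingEnd ℂ (χ f))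
    {F : 𝓢(E, ℂ)} (hF : χ F ≠ 0) :
    ∃ x : E, ∀ f, (χ f = 0 ↔ f x = 0) := by
  set r : ℝ := Complex.normSq (χ F) with hr
  have hrpos : 0 < r := Complex.normSq_pos.mpr hF
  have hrne : (r : ℂ) ≠ 0 := by simpa using ne_of_gt hrpos
  set F₁ : 𝓢(E, ℂ) := mulS F (conjS F) with hF₁
  have hχF₁ : χ F₁ = (r : ℂ) := by rw [hF₁, hmul, hstar, Complex.mul_conj]
  have hF₁val : ∀ y, F₁ y = ((Complex.normSq (F y) : ℝ) : ℂ) := by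
    intro y
    rw [hF₁, mulS_apply, conjS_apply, Complex.mul_conj]
  -- the scalar action on reals
  set X : ℝ → ℂ := fun c => χ (((c : ℝ) : ℂ) • F₁) with hX
  have hXreal : ∀ c, X c = (((X c).re : ℝ) : ℂ) := by
    intro c
    have h1 : conjS (((c : ℝ) : ℂ) • F₁) = ((c : ℝ) : ℂ) • F₁ := by
      refine SchwartzMap.ext fun y => ?_
      rw [conjS_apply, SchwartzMap.smul_apply, hF₁val]
      simp [smul_eq_mul]
    have h2 := hstar (((c : ℝ) : ℂ) • F₁)
    rw [h1] at h2
    have h3 : (starRingEnd ℂ) (X c) = X c := h2.symm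
    rw [Complex.conj_eq_iff_re] at h3
    exact h3.symm
  have hXmul : ∀ c d : ℝ, X c * X d = X (c * d) * (r : ℂ) := by
    intro c d
    have h1 : mulS (((c : ℝ) : ℂ) • F₁) (((d : ℝ) : ℂ) • F₁)
        = mulS ((((c * d : ℝ)) : ℂ) • F₁) F₁ := by
      refine SchwartzMap.ext fun y => ?_
      simp only [mulS_apply, SchwartzMap.smul_apply, smul_eq_mul]
      push_cast
      ring
    have h2 := hmul (((c : ℝ) : ℂ) • F₁) (((d : ℝ) : ℂ) • F₁)
    rw [h1, hmul] at h2
    rw [← h2, hχF₁]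
  have hXadd : ∀ c d : ℝ, X (c + d) = X c + X d := by
    intro c d
    have h1 : (((c + d : ℝ)) : ℂ) • F₁ = ((c : ℝ) : ℂ) • F₁ + ((d : ℝ) : ℂ) • F₁ := by
      push_cast
      rw [← add_smul]
    rw [hX]
    simp only []
    rw [h1, hadd]
  have hXone : X 1 = (r : ℂ) := by
    rw [hX]
    simp only [Complex.ofReal_one, one_smul]
    exact hχF₁
  have hXzero : X 0 = 0 := by
    have h := hXadd 0 0
    rw [add_zero] at h
    linear_combination -h
  -- the induced ring homomorphism on ℝ is the identity
  set τ : ℝ → ℝ := fun c => (X c).re / r with hτ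
  have hτmul : ∀ c d, τ (c * d) = τ c * τ d := by
    intro c d
    have h1 := hXmul c d
    rw [hXreal c, hXreal d, hXreal (c * d)] at h1
    have h2 : (X c).re * (X d).re = (X (c * d)).re * r := by exact_mod_cast h1
    have hrne' : r ≠ 0 := ne_of_gt hrpos
    rw [hτ]
    simp only []
    rw [div_mul_div_comm, h2, mul_comm ((X (c*d)).re) r, mul_div_mul_left _ _ hrne']
  have hτadd : ∀ c d, τ (c + d) = τ c + τ d := by
    intro c d
    have h1 := hXadd c d
    rw [hXreal c, hXreal d, hXreal (c + d)] at h1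
    have h2 : (X (c + d)).re = (X c).re + (X d).re := by exact_mod_cast h1
    rw [hτ]
    simp only []
    rw [h2]
    ring
  have hτone : τ 1 = 1 := by
    rw [hτ]
    simp only []
    rw [hXone]
    simp only [Complex.ofReal_re]
    exact div_self (ne_of_gt hrpos)
  have hτzero : τ 0 = 0 := by
    rw [hτ]
    simp only []
    rw [hXzero]
    simp
  have hLid : ∀ c : ℝ, τ c = c := by
    intro c
    let L : ℝ →+* ℝ := ⟨⟨⟨τ, hτone⟩, hτmul⟩, hτzero, hτadd⟩
    have h1 : L = RingHom.id ℝ := Subsingleton.elim _ _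
    have h2 : L c = c := by rw [h1]; rfl
    exact h2
  have hXval : ∀ c : ℝ, X c = (((c * r : ℝ)) : ℂ) := by
    intro c
    rw [hXreal c]
    have hrne' : r ≠ 0 := ne_of_gt hrpos
    have h2 := hLid c
    rw [hτ] at h2
    simp only [] at h2
    rw [div_eq_iff hrne'] at h2
    exact_mod_cast h2
  -- real linearity
  have hRlin : ∀ (c : ℝ) (f : 𝓢(E, ℂ)), χ (((c : ℝ) : ℂ) • f) = ((c : ℝ) : ℂ) * χ f := by
    intro c f
    have h1 : mulS (((c : ℝ) : ℂ) • f) F₁ = mulS f (((c : ℝ) : ℂ) • F₁) := by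
      refine SchwartzMap.ext fun y => ?_
      simp only [mulS_apply, SchwartzMap.smul_apply, smul_eq_mul]
      ring
    have h2 := hmul (((c : ℝ) : ℂ) • f) F₁
    have hfold : χ (((c : ℝ) : ℂ) • F₁) = X c := rfl
    rw [h1, hmul, hfold, hXval c, hχF₁] at h2
    have h3 : χ (((c : ℝ) : ℂ) • f) * (r:ℂ) = (c : ℂ) * χ f * (r:ℂ) := by
      rw [← h2]
      push_cast
      ring
    exact mul_right_cancel₀ hrne h3
  -- the action of I
  set sC : ℂ := χ (Complex.I • F₁) / (r : ℂ) with hsC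
  clear_value sC
  have hIlin : ∀ f : 𝓢(E, ℂ), χ (Complex.I • f) = sC * χ f := by
    intro f
    have h1 : mulS (Complex.I • f) F₁ = mulS f (Complex.I • F₁) := by
      refine SchwartzMap.ext fun y => ?_
      simp only [mulS_apply, SchwartzMap.smul_apply, smul_eq_mul]
      ring
    have h2 := hmul (Complex.I • f) F₁
    rw [h1, hmul] at h2
    rw [hχF₁] at h2
    have h3 : χ (Complex.I • f) * (r:ℂ) = sC * χ f * (r:ℂ) := by
      rw [← h2, hsC]
      field_simp
    exact mul_right_cancel₀ hrne h3
  have hs2 : sC * sC = -1 := by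
    have h1 : mulS (Complex.I • F₁) (Complex.I • F₁)
        = (((-1 : ℝ)) : ℂ) • mulS F₁ F₁ := by
      refine SchwartzMap.ext fun y => ?_
      simp only [mulS_apply, SchwartzMap.smul_apply, smul_eq_mul]
      push_cast
      linear_combination (F₁ y * F₁ y) * Complex.I_mul_I
    have h2 := hmul (Complex.I • F₁) (Complex.I • F₁)
    rw [h1, hRlin, hmul, hχF₁] at h2
    -- h2 : χ (I • F₁) * χ (I • F₁) = -1 * (r * r)
    have h3 : χ (Complex.I • F₁) = sC * (r : ℂ) := by
      rw [hsC]
      field_simp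
    rw [h3] at h2
    have h4 : (sC * sC) * ((r:ℂ) * (r:ℂ)) = (-1) * ((r:ℂ) * (r:ℂ)) := by
      push_cast at h2 ⊢
      linear_combination -h2
    exact mul_right_cancel₀ (mul_ne_zero hrne hrne) h4
  -- full scalar action
  have hClin : ∀ (c : ℂ) (f : 𝓢(E, ℂ)),
      χ (c • f) = ((c.re : ℂ) + (c.im : ℂ) * sC) * χ f := by
    intro c f
    have hc : c • f = ((c.re : ℝ) : ℂ) • f + ((c.im : ℝ) : ℂ) • (Complex.I • f) := by
      rw [smul_smul, ← add_smul]
      congr 1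
      exact (Complex.re_add_im c).symm
    rw [hc, hadd, hRlin, hRlin, hIlin]
    ring
  have hcases : sC = Complex.I ∨ sC = -Complex.I := by
    have h1 : (sC - Complex.I) * (sC + Complex.I) = 0 := by
      have hI : Complex.I * Complex.I = -1 := Complex.I_mul_I
      linear_combination hs2 - hI
    rcases mul_eq_zero.mp h1 with h2 | h2
    · exact Or.inl (sub_eq_zero.mp h2)
    · exact Or.inr (eq_neg_of_add_eq_zero_left h2)
  rcases hcases with hsI | hsI
  · have hlin : ∀ (c : ℂ) (f : 𝓢(E, ℂ)), χ (c • f) = c * χ f := by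
      intro c f
      rw [hClin, hsI]
      congr 1
      exact Complex.re_add_im c
    obtain ⟨x, hx⟩ := char_linear hadd hmul hstar hlin hF
    exact ⟨x, fun f => by rw [hx f]⟩
  · set χ' : 𝓢(E, ℂ) → ℂ := fun f => (starRingEnd ℂ) (χ f) with hχ'
    have hadd' : ∀ f g, χ' (f + g) = χ' f + χ' g := fun f g => by
      rw [hχ']
      simp only []
      rw [hadd, map_add]
    have hmul' : ∀ f g, χ' (mulS f g) = χ' f * χ' g := fun f g => by
      rw [hχ']
      simp only []
      rw [hmul, map_mul]
    have hstar' : ∀ f, χ' (conjS f) = (starRingEnd ℂ) (χ' f) := fun f => by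
      rw [hχ']
      simp only []
      rw [hstar]
    have hlin' : ∀ (c : ℂ) (f : 𝓢(E, ℂ)), χ' (c • f) = c * χ' f := by
      intro c f
      rw [hχ']
      simp only []
      have hckey : (starRingEnd ℂ) ((c.re : ℂ) + (c.im : ℂ) * sC) = c := by
        rw [hsI, map_add, map_mul]
        simp only [Complex.conj_ofReal, map_neg, Complex.conj_I, neg_neg]
        exact Complex.re_add_im c
      rw [hClin, map_mul, hckey]
    have hF' : χ' F ≠ 0 := by
      rw [hχ']
      simp only []
      simpa using hF
    obtain ⟨x, hx⟩ := char_linear hadd' hmul' hstar' hlin' hF'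
    refine ⟨x, fun f => ?_⟩
    rw [← hx f, hχ']
    simp only []
    rw [map_eq_zero]

end Char2
theorem stmt_6 (n : ℕ)
    (U : SchwartzMap (EuclideanSpace ℝ (Fin n)) ℂ → SchwartzMap (EuclideanSpace ℝ (Fin n)) ℂ)
    (hUbij : Function.Bijective U)
    (h1 : ∀ f g h : SchwartzMap (EuclideanSpace ℝ (Fin n)) ℂ,
      (∀ x, h x = f x + starRingEnd ℂ (g x)) →
      ∀ x, U h x = U f x + starRingEnd ℂ (U g x))
    (h2 : ∀ f g h : SchwartzMap (EuclideanSpace ℝ (Fin n)) ℂ,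
      (∀ x, h x = f x * g x) → ∀ x, U h x = U f x * U g x)
    (h3 : ∀ f g h : SchwartzMap (EuclideanSpace ℝ (Fin n)) ℂ,
      (∀ x, h x = ∫ y, f (x - y) * g y) →
      ∀ x, U h x = ∫ y, U f (x - y) * U g y) :
    ∃ A : EuclideanSpace ℝ (Fin n) → EuclideanSpace ℝ (Fin n),
      Function.Bijective A ∧
      ∀ f : SchwartzMap (EuclideanSpace ℝ (Fin n)) ℂ,
        A '' tsupport ⇑f = tsupport ⇑(U f) := by
  clear h3
  set E := EuclideanSpace ℝ (Fin n) with hE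
  -- basic algebraic properties of U
  have hU0 : ∀ x : E, U 0 x = 0 := by
    intro x
    have h := h1 0 0 0 (fun x => by simp) x
    have h4 : (starRingEnd ℂ) (U 0 x) = 0 := by linear_combination -h
    have h5 := congrArg (starRingEnd ℂ) h4
    simpa using h5
  have hUstar : ∀ (g : 𝓢(E, ℂ)) (x : E), U (conjS g) x = (starRingEnd ℂ) (U g x) := by
    intro g x
    have h := h1 0 g (conjS g) (fun x => by simp [conjS_apply]) x
    rw [h, hU0, zero_add]
  have hUadd : ∀ (f g : 𝓢(E, ℂ)) (x : E), U (f + g) x = U f x + U g x := by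
    intro f g x
    have h := h1 f (conjS g) (f + g) (fun x => by simp [conjS_apply]) x
    rw [h, hUstar]
    simp
  have hUmul : ∀ (f g : 𝓢(E, ℂ)) (x : E), U (mulS f g) x = U f x * U g x := by
    intro f g x
    exact h2 f g (mulS f g) (fun x => mulS_apply f g x) x
  -- the inverse map
  set V : 𝓢(E, ℂ) → 𝓢(E, ℂ) := Function.invFun U with hV
  have hVright : ∀ F, U (V F) = F := Function.rightInverse_invFun hUbij.2
  have hVleft : ∀ f, V (U f) = f := Function.leftInverse_invFun hUbij.1
  have hVadd : ∀ (F G : 𝓢(E, ℂ)) (x : E), V (F + G) x = V F x + V G x := by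
    intro F G x
    have h : U (V F + V G) = F + G := by
      refine SchwartzMap.ext fun y => ?_
      rw [hUadd, hVright, hVright, SchwartzMap.add_apply]
    have h4 : V (F + G) = V F + V G := by
      have := congrArg V h
      rw [hVleft] at this
      exact this.symm
    rw [h4, SchwartzMap.add_apply]
  have hVmul : ∀ (F G : 𝓢(E, ℂ)) (x : E), V (mulS F G) x = V F x * V G x := by
    intro F G x
    have h : U (mulS (V F) (V G)) = mulS F G := by
      refine SchwartzMap.ext fun y => ?_
      rw [hUmul, hVright, hVright, mulS_apply]
    have h4 : V (mulS F G) = mulS (V F) (V G) := by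
      have := congrArg V h
      rw [hVleft] at this
      exact this.symm
    rw [h4, mulS_apply]
  have hVstar : ∀ (F : 𝓢(E, ℂ)) (x : E), V (conjS F) x = (starRingEnd ℂ) (V F x) := by
    intro F x
    have h : U (conjS (V F)) = conjS F := by
      refine SchwartzMap.ext fun y => ?_
      rw [hUstar, hVright, conjS_apply]
    have h4 : V (conjS F) = conjS (V F) := by
      have := congrArg V h
      rw [hVleft] at this
      exact this.symm
    rw [h4, conjS_apply]
  -- standard bump with value 1 at a point
  have hbump : ∀ (c : E) (d : ℝ), 0 < d → ∃ b : 𝓢(E, ℂ),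
      b c = 1 ∧ Function.support ⇑b = Metric.ball c d := by
    intro c d hd
    refine ⟨bumpS (⟨d/2, d, half_pos hd, half_lt_self hd⟩ : ContDiffBump c), ?_, ?_⟩
    · rw [bumpS_apply, ContDiffBump.one_of_mem_closedBall]
      · norm_num
      · exact Metric.mem_closedBall_self (le_of_lt (half_pos hd))
    · ext z
      have h7 : bumpS (⟨d/2, d, half_pos hd, half_lt_self hd⟩ : ContDiffBump c) z ≠ 0
          ↔ (⟨d/2, d, half_pos hd, half_lt_self hd⟩ : ContDiffBump c) z ≠ 0 := by
        rw [bumpS_apply]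
        simp
      rw [Function.mem_support, h7, ← Function.mem_support, ContDiffBump.support_eq]
  -- point maps from characters
  set P : E → E → Prop := fun y x => ∀ f : 𝓢(E, ℂ), (U f y = 0 ↔ f x = 0) with hP
  have hBex : ∀ y : E, ∃ x, P y x := by
    intro y
    obtain ⟨b, hb1, -⟩ := hbump y 1 one_pos
    have hFne : U (V b) y ≠ 0 := by
      rw [hVright]
      rw [hb1]
      exact one_ne_zero
    exact char_eval (χ := fun f => U f y) (fun f g => hUadd f g y)
      (fun f g => hUmul f g y) (fun f => hUstar f y) hFne
  have hB'ex : ∀ x : E, ∃ y, ∀ F : 𝓢(E, ℂ), (V F x = 0 ↔ F y = 0) := by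
    intro x
    obtain ⟨b, hb1, -⟩ := hbump x 1 one_pos
    have hFne : V (U b) x ≠ 0 := by
      rw [hVleft, hb1]
      exact one_ne_zero
    exact char_eval (χ := fun F => V F x) (fun f g => hVadd f g x)
      (fun f g => hVmul f g x) (fun f => hVstar f x) hFne
  choose B hB using hBex
  choose B' hB' using hB'ex
  -- uniqueness of the point
  have hPuniq : ∀ y x x', P y x → P y x' → x = x' := by
    intro y x x' hx hx'
    by_contra hne
    have hd : 0 < dist x' x := dist_pos.mpr (fun h => hne h.symm)
    obtain ⟨b, hb1, hbs⟩ := hbump x (dist x' x) hd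
    have h4 : U b y ≠ 0 := by
      intro h0
      have h9 := (hx b).mp h0
      rw [hb1] at h9
      exact one_ne_zero h9
    have h5 : b x' = 0 := by
      by_contra h6
      have : x' ∈ Metric.ball x (dist x' x) := by
        rw [← hbs]
        exact h6
      simp [Metric.mem_ball] at this
    exact h4 ((hx' b).mpr h5)
  have hP'uniq : ∀ x y y', (∀ F : 𝓢(E, ℂ), (V F x = 0 ↔ F y = 0)) →
      (∀ F : 𝓢(E, ℂ), (V F x = 0 ↔ F y' = 0)) → y = y' := by
    intro x y y' hy hy'
    by_contra hne
    have hd : 0 < dist y' y := dist_pos.mpr (fun h => hne h.symm)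
    obtain ⟨b, hb1, hbs⟩ := hbump y (dist y' y) hd
    have h4 : V b x ≠ 0 := by
      intro h0
      have h9 := (hy b).mp h0
      rw [hb1] at h9
      exact one_ne_zero h9
    have h5 : b y' = 0 := by
      by_contra h6
      have : y' ∈ Metric.ball y (dist y' y) := by
        rw [← hbs]
        exact h6
      simp [Metric.mem_ball] at this
    exact h4 ((hy' b).mpr h5)
  -- B and B' are mutually inverse
  have hPP' : ∀ y, ∀ F : 𝓢(E, ℂ), (V F (B y) = 0 ↔ F y = 0) := by
    intro y F
    have h := hB y (V F)
    rw [hVright] at h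
    exact h.symm
  have hP'P : ∀ x, P (B' x) x := by
    intro x f
    have h := hB' x (U f)
    rw [hVleft] at h
    exact h.symm
  have hBB' : ∀ x, B (B' x) = x := fun x => hPuniq (B' x) (B (B' x)) x (hB (B' x)) (hP'P x)
  have hB'B : ∀ y, B' (B y) = y := fun y => hP'uniq (B y) (B' (B y)) y (hB' (B y)) (hPP' y)
  -- continuity of B
  have hBcont : Continuous B := by
    rw [continuous_def]
    intro s hs
    rw [isOpen_iff_forall_mem_open]
    intro y hy
    obtain ⟨ε, hε, hball⟩ := Metric.isOpen_iff.mp hs (B y) hy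
    obtain ⟨b, hb1, hbs⟩ := hbump (B y) ε hε
    refine ⟨{z | U b z ≠ 0}, ?_, ?_, ?_⟩
    · intro z hz
      have h4 : b (B z) ≠ 0 := fun h5 => hz ((hB z b).mpr h5)
      have h6 : B z ∈ Metric.ball (B y) ε := by
        rw [← hbs]
        exact h4
      exact hball h6
    · exact isOpen_compl_singleton.preimage (U b).continuous
    · show U b y ≠ 0
      intro h0
      have h9 := (hB y b).mp h0
      rw [hb1] at h9
      exact one_ne_zero h9
  have hB'cont : Continuous B' := by
    rw [continuous_def]
    intro s hs
    rw [isOpen_iff_forall_mem_open]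
    intro x hx
    obtain ⟨ε, hε, hball⟩ := Metric.isOpen_iff.mp hs (B' x) hx
    obtain ⟨b, hb1, hbs⟩ := hbump (B' x) ε hε
    refine ⟨{z | V b z ≠ 0}, ?_, ?_, ?_⟩
    · intro z hz
      have h4 : b (B' z) ≠ 0 := fun h5 => hz ((hB' z b).mpr h5)
      have h6 : B' z ∈ Metric.ball (B' x) ε := by
        rw [← hbs]
        exact h4
      exact hball h6
    · exact isOpen_compl_singleton.preimage (V b).continuous
    · show V b x ≠ 0
      intro h0
      have h9 := (hB' x b).mp h0
      rw [hb1] at h9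
      exact one_ne_zero h9
  -- the homeomorphism
  set e : E ≃ E := ⟨B, B', hB'B, hBB'⟩ with he
  set hom : E ≃ₜ E := ⟨e, hBcont, hB'cont⟩ with hhom
  refine ⟨B', hom.symm.bijective, fun f => ?_⟩
  have hsupp : Function.support ⇑(U f) = B ⁻¹' (Function.support ⇑f) := by
    ext z
    simp only [Function.mem_support, Set.mem_preimage]
    exact not_congr (hB z f)
  have himg : B' '' tsupport ⇑f = ⇑hom.symm '' tsupport ⇑f := rfl
  have hset : ⇑hom.symm '' Function.support ⇑f = B ⁻¹' Function.support ⇑f := by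
    ext z
    constructor
    · rintro ⟨w, hw, rfl⟩
      show B ((⇑hom.symm) w) ∈ Function.support ⇑f
      have h10 : (⇑hom.symm) w = B' w := rfl
      rw [h10, hBB' w]
      exact hw
    · intro hz
      exact ⟨B z, hz, by show B' (B z) = z; exact hB'B z⟩
  rw [himg, tsupport, Homeomorph.image_closure, tsupport, hsupp, hset]
end

section
/- Let U : S(ℝⁿ) → S(ℝⁿ) be a bijection satisfying, for all f, g ∈ S(ℝⁿ): (1) U(f + ḡ) = U(f) + conj(U(g)), (2) U(f·g) = U(f)·U(g), (3) U(f ∗ g) = U(f) ∗ U(g). If A : ℝⁿ → ℝⁿ is a bijection such that A(supp f) = supp Uf for every f ∈ S(ℝⁿ), then A is a homeomorphism of ℝⁿ onto itself. -/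
/-!
Since `U` is onto and `A '' tsupport f = tsupport (U f)`, both `A` and `A⁻¹` pull back the
topological support of any Schwartz function to the topological support of a Schwartz function,
hence to a closed set. These supports are rich enough to cut out every closed set: if `x ∉ C`,
multiplying a nowhere vanishing Schwartz function by `1 - b` for a bump `b` around `x` gives a
Schwartz function whose support contains `C` and misses a neighbourhood of `x`. So `A` and
`A⁻¹` are continuous.
-/

section

open Polynomial Real Nat SchwartzMap

theorem continuous_of_isClosed_preimage_of_separating {X Y ι : Type*} [TopologicalSpace X]
    [TopologicalSpace Y] {f : X → Y} (F : ι → Set Y)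
    (hF : ∀ C : Set Y, IsClosed C → ∀ y ∉ C, ∃ i, C ⊆ F i ∧ y ∉ F i)
    (hf : ∀ i, IsClosed (f ⁻¹' F i)) : Continuous f := by
  refine continuous_iff_isClosed.2 fun C hC => isClosed_of_closure_subset fun x hx => ?_
  by_contra hfx
  obtain ⟨i, hCF, hxF⟩ := hF C hC (f x) hfx
  exact hxF ((hf i).closure_subset_iff.2 (Set.preimage_mono hCF) hx)

lemma hasDerivAt_eval_mul_exp_neg_sq (p : ℝ[X]) (t : ℝ) :
    HasDerivAt (fun t => p.eval t * exp (-t ^ 2))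
      ((derivative p - 2 * X * p).eval t * exp (-t ^ 2)) t := by
  have hexp : HasDerivAt (fun t : ℝ => exp (-t ^ 2)) (exp (-t ^ 2) * -(2 * t)) t := by
    simpa using ((hasDerivAt_pow 2 t).neg).exp
  exact ((p.hasDerivAt t).mul hexp).congr_deriv
    (by simp only [eval_sub, eval_mul, eval_ofNat, eval_X]; ring)

lemma exists_iteratedDeriv_exp_neg_sq (n : ℕ) : ∃ p : ℝ[X],
    iteratedDeriv n (fun t => exp (-t ^ 2)) = fun t => p.eval t * exp (-t ^ 2) := by
  induction n with
  | zero => exact ⟨1, by simp⟩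
  | succ n ih =>
    obtain ⟨p, hp⟩ := ih
    refine ⟨derivative p - 2 * X * p, ?_⟩
    rw [iteratedDeriv_succ, hp]
    exact funext fun t => (hasDerivAt_eval_mul_exp_neg_sq p t).deriv

lemma abs_pow_mul_exp_neg_sq_le (i : ℕ) (t : ℝ) : |t| ^ i * exp (-t ^ 2) ≤ i ! * exp 1 := by
  have hpow : |t| ^ i ≤ i ! * exp |t| := by
    have := pow_div_factorial_le_exp |t| (abs_nonneg t) i
    rwa [div_le_iff₀ (by positivity), mul_comm] at this
  have hquad : |t| - t ^ 2 ≤ 1 := by nlinarith [sq_abs t, sq_nonneg (|t| - 1)]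
  calc |t| ^ i * exp (-t ^ 2) ≤ i ! * exp |t| * exp (-t ^ 2) := by gcongr
    _ = i ! * exp (|t| - t ^ 2) := by rw [mul_assoc, ← exp_add, sub_eq_add_neg]
    _ ≤ i ! * exp 1 := by gcongr

lemma exists_abs_eval_mul_exp_neg_sq_le (p : ℝ[X]) :
    ∃ C, ∀ t, |p.eval t| * exp (-t ^ 2) ≤ C := by
  refine ⟨∑ i ∈ Finset.range (p.natDegree + 1), |p.coeff i| * (i ! * exp 1), fun t => ?_⟩
  calc |p.eval t| * exp (-t ^ 2)
      ≤ (∑ i ∈ Finset.range (p.natDegree + 1), |p.coeff i| * |t| ^ i) * exp (-t ^ 2) := by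
        gcongr
        rw [eval_eq_sum_range]
        exact (Finset.abs_sum_le_sum_abs _ _).trans_eq (by simp [abs_mul])
    _ = ∑ i ∈ Finset.range (p.natDegree + 1), |p.coeff i| * (|t| ^ i * exp (-t ^ 2)) := by
        rw [Finset.sum_mul]
        simp_rw [mul_assoc]
    _ ≤ _ := Finset.sum_le_sum fun i _ =>
        mul_le_mul_of_nonneg_left (abs_pow_mul_exp_neg_sq_le i t) (abs_nonneg _)

noncomputable def gaussianSchwartz : 𝓢(ℝ, ℝ) where
  toFun t := exp (-t ^ 2)
  smooth' := by fun_prop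
  decay' k n := by
    obtain ⟨p, hp⟩ := exists_iteratedDeriv_exp_neg_sq n
    obtain ⟨C, hC⟩ := exists_abs_eval_mul_exp_neg_sq_le (X ^ k * p)
    refine ⟨C, fun t => ?_⟩
    rw [norm_iteratedFDeriv_eq_norm_iteratedDeriv, hp]
    simpa [abs_mul, mul_assoc, abs_of_pos (exp_pos _)] using hC t

variable {E : Type*} [NormedAddCommGroup E] [InnerProductSpace ℝ E]

theorem exists_schwartzMap_ne_zero : ∃ g : 𝓢(E, ℂ), ∀ x, g x ≠ 0 := by
  have hupper : ∃ (k : ℕ) (C : ℝ), ∀ x : E, ‖x‖ ≤ C * (1 + ‖‖x‖ ^ 2‖) ^ k := by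
    refine ⟨1, 1, fun x => ?_⟩
    rw [norm_of_nonneg (by positivity)]
    nlinarith [sq_nonneg (‖x‖ - 1)]
  exact ⟨(compCLM ℝ (Function.hasTemperateGrowth_norm_sq E) hupper gaussianSchwartz).postcompCLM
    Complex.ofRealCLM, fun x => Complex.ofReal_ne_zero.2 (exp_ne_zero _)⟩

theorem exists_schwartzMap_subset_tsupport_notMem [FiniteDimensional ℝ E] {C : Set E}
    (hC : IsClosed C) {x : E} (hx : x ∉ C) :
    ∃ f : 𝓢(E, ℂ), C ⊆ tsupport f ∧ x ∉ tsupport f := by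
  obtain ⟨ε, hε, hball⟩ := Metric.isOpen_iff.1 hC.isOpen_compl x hx
  let b : ContDiffBump x := ⟨ε / 2, ε, half_pos hε, half_lt_self hε⟩
  obtain ⟨g, hg⟩ := exists_schwartzMap_ne_zero (E := E)
  have hb : (fun y => 1 - b y).HasTemperateGrowth :=
    (Function.HasTemperateGrowth.const 1).sub (b.hasCompactSupport.hasTemperateGrowth b.contDiff)
  refine ⟨smulLeftCLM ℂ (fun y => 1 - b y) g, fun y hy => subset_tsupport _ ?_, ?_⟩
  · have : b y = 0 := b.zero_of_le_dist (not_lt.1 fun h => hball h hy)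
    simp [smulLeftCLM_apply_apply hb, this, hg y]
  · rw [notMem_tsupport_iff_eventuallyEq]
    filter_upwards [b.eventuallyEq_one] with y hy
    simp [smulLeftCLM_apply_apply hb, hy]

end

open MeasureTheory SchwartzMap Complex

theorem stmt_7_general (n : ℕ)
    (U : SchwartzMap (EuclideanSpace ℝ (Fin n)) ℂ → SchwartzMap (EuclideanSpace ℝ (Fin n)) ℂ)
    (hUbij : Function.Bijective U)
    (A : EuclideanSpace ℝ (Fin n) → EuclideanSpace ℝ (Fin n))
    (hAbij : Function.Bijective A)
    (hA : ∀ f : SchwartzMap (EuclideanSpace ℝ (Fin n)) ℂ,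
      A '' tsupport ⇑f = tsupport ⇑(U f)) :
    ∃ e : EuclideanSpace ℝ (Fin n) ≃ₜ EuclideanSpace ℝ (Fin n), ⇑e = A := by
  let e := Equiv.ofBijective A hAbij
  have hsep := fun C (hC : IsClosed C) x (hx : x ∉ C) =>
    exists_schwartzMap_subset_tsupport_notMem (E := EuclideanSpace ℝ (Fin n)) hC hx
  have hcont : Continuous A := continuous_of_isClosed_preimage_of_separating _ hsep fun g => by
    obtain ⟨f, rfl⟩ := hUbij.surjective g
    rw [← hA f, hAbij.injective.preimage_image]
    exact isClosed_tsupport _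
  have hcont_symm : Continuous e.symm :=
    continuous_of_isClosed_preimage_of_separating _ hsep fun f => by
      rw [← e.image_eq_preimage_symm]
      change IsClosed (A '' _)
      rw [hA f]
      exact isClosed_tsupport _
  exact ⟨⟨e, hcont, hcont_symm⟩, rfl⟩

theorem stmt_7 (n : ℕ)
    (U : SchwartzMap (EuclideanSpace ℝ (Fin n)) ℂ → SchwartzMap (EuclideanSpace ℝ (Fin n)) ℂ)
    (hUbij : Function.Bijective U)
    (h1 : ∀ f g h : SchwartzMap (EuclideanSpace ℝ (Fin n)) ℂ,
      (∀ x, h x = f x + starRingEnd ℂ (g x)) →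
      ∀ x, U h x = U f x + starRingEnd ℂ (U g x))
    (h2 : ∀ f g h : SchwartzMap (EuclideanSpace ℝ (Fin n)) ℂ,
      (∀ x, h x = f x * g x) → ∀ x, U h x = U f x * U g x)
    (h3 : ∀ f g h : SchwartzMap (EuclideanSpace ℝ (Fin n)) ℂ,
      (∀ x, h x = ∫ y, f (x - y) * g y) →
      ∀ x, U h x = ∫ y, U f (x - y) * U g y)
    (A : EuclideanSpace ℝ (Fin n) → EuclideanSpace ℝ (Fin n))
    (hAbij : Function.Bijective A)
    (hA : ∀ f : SchwartzMap (EuclideanSpace ℝ (Fin n)) ℂ,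
      A '' tsupport ⇑f = tsupport ⇑(U f)) :
    ∃ e : EuclideanSpace ℝ (Fin n) ≃ₜ EuclideanSpace ℝ (Fin n), ⇑e = A :=
  stmt_7_general n U hUbij A hAbij hA
end

section
/- Let U : S(ℝⁿ) → S(ℝⁿ) be a bijection satisfying, for all f, g ∈ S(ℝⁿ): (1) U(f + ḡ) = U(f) + conj(U(g)), (2) U(f·g) = U(f)·U(g), (3) U(f ∗ g) = U(f) ∗ U(g). If A : ℝⁿ → ℝⁿ is a homeomorphism such that A(supp f) = supp Uf for every f ∈ S(ℝⁿ), then A is additive: A(x + y) = A(x) + A(y) for all x, y ∈ ℝⁿ. -/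
/-!
For nonnegative bumps `φ` near `x` and `ψ` near `y`, the convolution `φ ∗ ψ` does not vanish at
`x + y`, while `supp U(φ ∗ ψ) = supp (Uφ ∗ Uψ) ⊆ closure (supp Uφ + supp Uψ)`. Transporting
supports by `A`, the point `A (x + y)` lies in the closure of `A V + A W` for all neighbourhoods
`V` of `x` and `W` of `y`, and continuity of `A` and of addition forces `A (x + y) = A x + A y`.
-/

open MeasureTheory SchwartzMap Complex

open Set Filter Topology ContinuousLinearMap
open scoped Pointwise Convolution ContDiff

theorem eq_add_of_forall_mem_closure_image_add_image {X G : Type*} [TopologicalSpace X]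
    [TopologicalSpace G] [Add G] [ContinuousAdd G] [T3Space G] {A : X → G} {x y : X} {z : G}
    (hx : ContinuousAt A x) (hy : ContinuousAt A y)
    (h : ∀ s ∈ 𝓝 x, ∀ t ∈ 𝓝 y, z ∈ closure (A '' s + A '' t)) :
    z = A x + A y := by
  by_contra hne
  obtain ⟨V, hV, hVclosed, hVz⟩ :=
    exists_mem_nhds_isClosed_subset (isOpen_ne.mem_nhds (Ne.symm hne))
  have hsum : ContinuousAt (fun p : X × X => A p.1 + A p.2) (x, y) :=
    (hx.comp continuousAt_fst).add (hy.comp continuousAt_snd)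
  obtain ⟨s, hs, t, ht, hst⟩ := mem_nhds_prod_iff.mp (hsum hV)
  have hsub : A '' s + A '' t ⊆ V := by
    rintro _ ⟨_, ⟨u, hu, rfl⟩, _, ⟨v, hv, rfl⟩, rfl⟩
    exact hst (mk_mem_prod hu hv)
  exact hVz (hVclosed.closure_subset_iff.mpr hsub (h s hs t ht)) rfl

theorem tsupport_convolution_subset {𝕜 G E E' F : Type*} [NontriviallyNormedField 𝕜]
    [NormedAddCommGroup E] [NormedAddCommGroup E'] [NormedAddCommGroup F]
    [NormedSpace 𝕜 E] [NormedSpace 𝕜 E'] [NormedSpace 𝕜 F] [NormedSpace ℝ F]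
    [AddCommGroup G] [TopologicalSpace G] [MeasurableSpace G]
    (L : E →L[𝕜] E' →L[𝕜] F) (μ : Measure G) (f : G → E) (g : G → E') :
    tsupport (f ⋆[L, μ] g) ⊆ closure (tsupport f + tsupport g) :=
  closure_mono ((support_convolution_subset L).trans (add_subset_add subset_closure subset_closure))

theorem convolution_mul_pos {G : Type*} [AddCommGroup G] [TopologicalSpace G]
    [IsTopologicalAddGroup G] [MeasurableSpace G] [OpensMeasurableSpace G] (μ : Measure G)
    [μ.IsOpenPosMeasure] [IsFiniteMeasureOnCompacts μ] {f g : G → ℝ} {x y : G}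
    (hf : Continuous f) (hg : Continuous g) (hcf : HasCompactSupport f) (hf0 : 0 ≤ f)
    (hg0 : 0 ≤ g) (hfx : 0 < f x) (hgy : 0 < g y) :
    0 < (f ⋆[mul ℝ ℝ, μ] g) (x + y) := by
  have hcont : Continuous fun t => f t * g (x + y - t) := by fun_prop
  refine hcont.integral_pos_of_hasCompactSupport_nonneg_nonzero (x := x) hcf.mul_right
    (fun t => mul_nonneg (hf0 t) (hg0 _)) ?_
  rw [add_sub_cancel_left]
  exact (mul_pos hfx hgy).ne'

theorem ofReal_convolution_mul {G : Type*} [AddGroup G] [MeasurableSpace G] (μ : Measure G)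
    (f g : G → ℝ) (z : G) :
    (((f ⋆[mul ℝ ℝ, μ] g) z : ℝ) : ℂ) = ((ofReal ∘ f) ⋆[mul ℝ ℂ, μ] (ofReal ∘ g)) z := by
  simp only [convolution_def, mul_apply', Function.comp_apply, ← ofReal_mul]
  exact integral_ofReal.symm

section Bump

variable {E : Type*} [NormedAddCommGroup E] [NormedSpace ℝ E] [FiniteDimensional ℝ E]

theorem exists_schwartzMap_ofReal_bump {x : E} {s : Set E} (hs : s ∈ 𝓝 x) :
    ∃ φ : E → ℝ, ∃ F : 𝓢(E, ℂ), ⇑F = ofReal ∘ φ ∧ tsupport φ ⊆ s ∧ HasCompactSupport φ ∧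
      Continuous φ ∧ 0 ≤ φ ∧ 0 < φ x := by
  obtain ⟨φ, hφs, hφc, hφd, hφr, hφx⟩ := exists_contDiff_tsupport_subset (n := ⊤) hs
  refine ⟨φ, (hφc.comp_left ofReal_zero).toSchwartzMap (ofRealCLM.contDiff.comp hφd), rfl, hφs,
    hφc, hφd.continuous, fun z => (hφr ⟨z, rfl⟩).1, by simp [hφx]⟩

theorem exists_schwartzMap_convolution_mem_tsupport [MeasurableSpace E] [BorelSpace E]
    (μ : Measure E) [μ.IsAddHaarMeasure] {x y : E} {s t : Set E} (hs : s ∈ 𝓝 x)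
    (ht : t ∈ 𝓝 y) :
    ∃ F G H : 𝓢(E, ℂ), tsupport F ⊆ s ∧ tsupport G ⊆ t ∧ ⇑H = ⇑F ⋆[mul ℝ ℂ, μ] ⇑G ∧
      x + y ∈ tsupport H := by
  obtain ⟨φ, F, hF, hφs, hφc, hφcont, hφ0, hφx⟩ := exists_schwartzMap_ofReal_bump hs
  obtain ⟨ψ, G, hG, hψt, hψc, hψcont, hψ0, hψy⟩ := exists_schwartzMap_ofReal_bump ht
  have hFc : HasCompactSupport F := hF ▸ hφc.comp_left ofReal_zero
  have hGc : HasCompactSupport G := hG ▸ hψc.comp_left ofReal_zero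
  let H : 𝓢(E, ℂ) := (hFc.convolution (mul ℝ ℂ) hGc (μ := μ)).toSchwartzMap
    (hGc.contDiff_convolution_right _ F.continuous.locallyIntegrable (G.smooth ⊤))
  refine ⟨F, G, H, ?_, ?_, rfl, subset_tsupport _ ?_⟩
  · exact hF ▸ (tsupport_comp_subset ofReal_zero φ).trans hφs
  · exact hG ▸ (tsupport_comp_subset ofReal_zero ψ).trans hψt
  · change (⇑F ⋆[mul ℝ ℂ, μ] ⇑G) (x + y) ≠ 0
    rw [hF, hG, ← ofReal_convolution_mul, ofReal_ne_zero]
    exact (convolution_mul_pos μ hφcont hψcont hφc hφ0 hψ0 hφx hψy).ne'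

end Bump

theorem stmt_8_general (n : ℕ)
    (U : SchwartzMap (EuclideanSpace ℝ (Fin n)) ℂ → SchwartzMap (EuclideanSpace ℝ (Fin n)) ℂ)
    (h3 : ∀ f g h : SchwartzMap (EuclideanSpace ℝ (Fin n)) ℂ,
      (∀ x, h x = ∫ y, f (x - y) * g y) →
      ∀ x, U h x = ∫ y, U f (x - y) * U g y)
    (A : EuclideanSpace ℝ (Fin n) ≃ₜ EuclideanSpace ℝ (Fin n))
    (hA : ∀ f : SchwartzMap (EuclideanSpace ℝ (Fin n)) ℂ,
      ⇑A '' tsupport ⇑f = tsupport ⇑(U f)) :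
    ∀ x y : EuclideanSpace ℝ (Fin n), A (x + y) = A x + A y := by
  intro x y
  refine eq_add_of_forall_mem_closure_image_add_image A.continuous.continuousAt
    A.continuous.continuousAt fun s hs t ht => ?_
  obtain ⟨F, G, H, hFs, hGt, hH, hxy⟩ := exists_schwartzMap_convolution_mem_tsupport volume hs ht
  have hUH : ⇑(U H) = ⇑(U F) ⋆[mul ℝ ℂ, volume] ⇑(U G) := by
    ext z
    rw [convolution_eq_swap]
    exact h3 F G H (fun w => by rw [hH, convolution_eq_swap]; rfl) z
  have hsub : tsupport (U H) ⊆ closure (A '' s + A '' t) :=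
    calc tsupport (U H) ⊆ closure (tsupport (U F) + tsupport (U G)) :=
          hUH ▸ tsupport_convolution_subset _ _ _ _
      _ = closure (A '' tsupport F + A '' tsupport G) := by rw [hA F, hA G]
      _ ⊆ closure (A '' s + A '' t) := by gcongr
  exact hsub (hA H ▸ mem_image_of_mem A hxy)

theorem stmt_8 (n : ℕ)
    (U : SchwartzMap (EuclideanSpace ℝ (Fin n)) ℂ → SchwartzMap (EuclideanSpace ℝ (Fin n)) ℂ)
    (hUbij : Function.Bijective U)
    (h1 : ∀ f g h : SchwartzMap (EuclideanSpace ℝ (Fin n)) ℂ,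
      (∀ x, h x = f x + starRingEnd ℂ (g x)) →
      ∀ x, U h x = U f x + starRingEnd ℂ (U g x))
    (h2 : ∀ f g h : SchwartzMap (EuclideanSpace ℝ (Fin n)) ℂ,
      (∀ x, h x = f x * g x) → ∀ x, U h x = U f x * U g x)
    (h3 : ∀ f g h : SchwartzMap (EuclideanSpace ℝ (Fin n)) ℂ,
      (∀ x, h x = ∫ y, f (x - y) * g y) →
      ∀ x, U h x = ∫ y, U f (x - y) * U g y)
    (A : EuclideanSpace ℝ (Fin n) ≃ₜ EuclideanSpace ℝ (Fin n))
    (hA : ∀ f : SchwartzMap (EuclideanSpace ℝ (Fin n)) ℂ,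
      ⇑A '' tsupport ⇑f = tsupport ⇑(U f)) :
    ∀ x y : EuclideanSpace ℝ (Fin n), A (x + y) = A x + A y :=
  stmt_8_general n U h3 A hA
end

section
/- Let U : S(ℝⁿ) → S(ℝⁿ) be a bijection satisfying, for all f, g ∈ S(ℝⁿ): (1) U(f + ḡ) = U(f) + conj(U(g)), (2) U(f·g) = U(f)·U(g), (3) U(f ∗ g) = U(f) ∗ U(g). Then there exists an invertible real-linear map A : ℝⁿ → ℝⁿ such that A(supp f) = supp Uf for every f ∈ S(ℝⁿ). -/
/-!
A multiplicative bijection `Φ` of `𝓢(E, ℂ)` preserves `f * g = 0`, and `tsupport f ⊆ tsupport g`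
holds iff every `h` with `h * g = 0` also has `h * f = 0`; so `Φ` preserves inclusions of supports
in both directions. The supports of `Φ φ` for bumps `φ` around `x` are nonempty and nested, and
compact because `Φ φ = Φ ψ * Φ φ` for a bump `ψ ≡ 1` near `supp φ` forces `Φ ψ = 1` on
`supp (Φ φ)`. As the radius shrinks they close down to one point `τ x`; `τ` is a homeomorphism,
inverted by the map built from `Φ⁻¹`, and carries `supp f` onto `supp (Φ f)`. If `Φ` also
respects convolution, `supp (Φ φ ⋆ Φ ψ) ⊆ supp (Φ φ) + supp (Φ ψ)` while `(φ ⋆ ψ) (x + y) ≠ 0`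
for bumps around `x` and `y`, so `τ` is additive, hence `ℝ`-linear by continuity.
-/

open Function Set Metric Filter Topology MeasureTheory
open scoped ContDiff Convolution SchwartzMap

namespace SchwartzMap

variable {E : Type*} [NormedAddCommGroup E] [NormedSpace ℝ E]

noncomputable instance : Mul 𝓢(E, ℂ) := ⟨fun f g => pairing (ContinuousLinearMap.mul ℝ ℂ) f g⟩

@[simp] theorem mul_apply (f g : 𝓢(E, ℂ)) (x : E) : (f * g) x = f x * g x := rfl

noncomputable instance : NonUnitalCommRing 𝓢(E, ℂ) :=
  DFunLike.coe_injective.nonUnitalCommRing _ rfl (fun _ _ => rfl) (fun _ _ => rfl) (fun _ => rfl)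
    (fun _ _ => rfl) (fun _ _ => rfl) (fun _ _ => rfl)

theorem mul_eq_zero_iff_disjoint_support {f g : 𝓢(E, ℂ)} :
    f * g = 0 ↔ Disjoint (support f) (support g) := by
  simp only [SchwartzMap.ext_iff, mul_apply, zero_apply, mul_eq_zero, Set.disjoint_left,
    mem_support, not_not, or_iff_not_imp_left]

theorem mul_eq_zero_iff_disjoint_support_tsupport {f g : 𝓢(E, ℂ)} :
    f * g = 0 ↔ Disjoint (support f) (tsupport g) := by
  rw [mul_eq_zero_iff_disjoint_support]
  exact ⟨fun h => h.closure_right f.continuous.isOpen_support,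
    fun h => h.mono_right (subset_tsupport g)⟩

theorem disjoint_interior_tsupport_of_mul_eq_zero {f g : 𝓢(E, ℂ)} (h : f * g = 0) :
    Disjoint (interior (tsupport f)) (tsupport g) := by
  rw [mul_comm, mul_eq_zero_iff_disjoint_support_tsupport] at h
  exact ((h.mono_right interior_subset).closure_left isOpen_interior).symm

theorem eq_one_of_mul_eq_self {f g : 𝓢(E, ℂ)} (h : g * f = f) {x : E} (hx : f x ≠ 0) :
    g x = 1 :=
  mul_right_cancel₀ hx (by simpa using DFunLike.congr_fun h x)

theorem tsupport_subset_support_of_mul_eq_self {f g : 𝓢(E, ℂ)} (h : g * f = f) :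
    tsupport f ⊆ support g := by
  refine (closure_minimal (fun x hx => eq_one_of_mul_eq_self h hx)
    (isClosed_eq g.continuous continuous_const)).trans fun x (hx : g x = 1) => ?_
  simp [mem_support, hx]

theorem hasCompactSupport_of_mul_eq_self [ProperSpace E] {f g : 𝓢(E, ℂ)} (h : g * f = f) :
    HasCompactSupport f := by
  -- `g = 1` on `support f`, whereas `‖g‖ < 1` off some compact set
  obtain ⟨K, hK, hKg⟩ := mem_cocompact.1 <|
    (NormedAddGroup.tendsto_nhds_zero.mp g.tendsto_cocompact) 1 one_pos
  refine HasCompactSupport.of_support_subset_isCompact hK fun x hx => ?_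
  by_contra hxK
  simpa [eq_one_of_mul_eq_self h hx] using hKg hxK

section MulEquiv

variable (Φ : 𝓢(E, ℂ) ≃* 𝓢(E, ℂ))

def supportImage (S : Set E) : Set E :=
  ⋃ (f : 𝓢(E, ℂ)) (_ : tsupport f ⊆ S), tsupport (Φ f)

theorem supportImage_mono : Monotone (supportImage Φ) := fun _ _ hST =>
  iUnion₂_mono' fun f hf => ⟨f, hf.trans hST, subset_rfl⟩

theorem tsupport_map_subset_interior_supportImage {f h : 𝓢(E, ℂ)} {S : Set E} (hf : h * f = f)
    (hS : tsupport h ⊆ S) : tsupport (Φ f) ⊆ interior (supportImage Φ S) :=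
  (tsupport_subset_support_of_mul_eq_self (by rw [← map_mul, hf])).trans <|
    interior_maximal ((subset_tsupport _).trans (subset_iUnion₂_of_subset h hS subset_rfl))
      (Φ h).continuous.isOpen_support

theorem directed_supportImage_closedBall (x : E) :
    Directed (· ⊇ ·) fun r : Ioi (0 : ℝ) => supportImage Φ (closedBall x r) :=
  Monotone.directed_ge fun _ _ hrs => supportImage_mono Φ (closedBall_subset_closedBall hrs)

end MulEquiv

end SchwartzMap

namespace ContDiffBump

open SchwartzMap

variable {E : Type*} [NormedAddCommGroup E] [NormedSpace ℝ E] [FiniteDimensional ℝ E] {c : E}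

noncomputable def toSchwartzMap (φ : ContDiffBump c) : 𝓢(E, ℂ) :=
  (φ.hasCompactSupport.comp_left (g := ((↑) : ℝ → ℂ)) Complex.ofReal_zero).toSchwartzMap
    (Complex.ofRealCLM.contDiff.comp φ.contDiff)

@[simp] theorem toSchwartzMap_apply (φ : ContDiffBump c) (x : E) :
    φ.toSchwartzMap x = (φ x : ℂ) := rfl

theorem support_toSchwartzMap (φ : ContDiffBump c) : support φ.toSchwartzMap = ball c φ.rOut := by
  simp [← φ.support_eq, Function.support]

theorem tsupport_toSchwartzMap (φ : ContDiffBump c) :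
    tsupport φ.toSchwartzMap = closedBall c φ.rOut := by
  rw [tsupport, support_toSchwartzMap, closure_ball c φ.rOut_pos.ne']

theorem toSchwartzMap_mul_of_support_subset (φ : ContDiffBump c) {f : 𝓢(E, ℂ)}
    (hf : support f ⊆ closedBall c φ.rIn) : φ.toSchwartzMap * f = f := by
  ext x
  by_cases hx : x ∈ support f
  · simp [φ.one_of_mem_closedBall (hf hx)]
  · simp [notMem_support.1 hx]

theorem toSchwartzMap_mul_toSchwartzMap_of_rOut_le (ψ φ : ContDiffBump c) (h : φ.rOut ≤ ψ.rIn) :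
    ψ.toSchwartzMap * φ.toSchwartzMap = φ.toSchwartzMap :=
  ψ.toSchwartzMap_mul_of_support_subset <| φ.support_toSchwartzMap.trans_subset <|
    ball_subset_closedBall.trans (closedBall_subset_closedBall h)

theorem toSchwartzMap_ne_zero (φ : ContDiffBump c) : φ.toSchwartzMap ≠ 0 := by
  intro h
  simpa [φ.one_of_mem_closedBall (mem_closedBall_self φ.rIn_pos.le)] using DFunLike.congr_fun h c

theorem hasCompactSupport_toSchwartzMap (φ : ContDiffBump c) :
    HasCompactSupport φ.toSchwartzMap := by
  rw [HasCompactSupport, tsupport_toSchwartzMap]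
  exact isCompact_closedBall c φ.rOut

theorem exists_toSchwartzMap_mul_eq_zero {f : 𝓢(E, ℂ)} {x : E} (hx : x ∉ tsupport f) :
    ∃ φ : ContDiffBump x, φ.toSchwartzMap * f = 0 := by
  obtain ⟨r, hr, hrx⟩ := Metric.isOpen_iff.1 (isClosed_tsupport f).isOpen_compl x hx
  refine ⟨⟨r / 2, r, half_pos hr, half_lt_self hr⟩, ?_⟩
  rw [mul_eq_zero_iff_disjoint_support_tsupport, support_toSchwartzMap]
  exact subset_compl_iff_disjoint_right.1 hrx

theorem convolution_toSchwartzMap_add_ne_zero [MeasurableSpace E] [BorelSpace E]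
    (μ : Measure E) [μ.IsAddHaarMeasure] {x y : E} (φ : ContDiffBump x) (ψ : ContDiffBump y) :
    (φ.toSchwartzMap ⋆[ContinuousLinearMap.mul ℝ ℂ, μ] ψ.toSchwartzMap) (x + y) ≠ 0 := by
  have hpos : 0 < ∫ t, φ t * ψ (x + y - t) ∂μ :=
    Continuous.integral_pos_of_hasCompactSupport_nonneg_nonzero (x := x)
      (φ.continuous.mul (ψ.continuous.comp (continuous_const.sub continuous_id)))
      φ.hasCompactSupport.mul_right (fun t => mul_nonneg φ.nonneg ψ.nonneg)
      (by simp [φ.one_of_mem_closedBall (mem_closedBall_self φ.rIn_pos.le),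
        ψ.one_of_mem_closedBall (mem_closedBall_self ψ.rIn_pos.le)])
  rw [convolution_def]
  simp only [toSchwartzMap_apply, ContinuousLinearMap.mul_apply', ← Complex.ofReal_mul,
    integral_complex_ofReal]
  exact_mod_cast hpos.ne'

end ContDiffBump

namespace SchwartzMap

variable {E : Type*} [NormedAddCommGroup E] [NormedSpace ℝ E] [FiniteDimensional ℝ E]

theorem tsupport_subset_iff_forall_mul_eq_zero {f g : 𝓢(E, ℂ)} :
    tsupport f ⊆ tsupport g ↔ ∀ h : 𝓢(E, ℂ), h * g = 0 → h * f = 0 := by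
  simp only [mul_eq_zero_iff_disjoint_support_tsupport]
  refine ⟨fun hfg h hg => hg.mono_right hfg, fun H x hxf => ?_⟩
  by_contra hxg
  obtain ⟨φ, hφ⟩ := ContDiffBump.exists_toSchwartzMap_mul_eq_zero hxg
  rw [mul_eq_zero_iff_disjoint_support_tsupport] at hφ
  exact (H _ hφ).ne_of_mem (φ.support_toSchwartzMap ▸ mem_ball_self φ.rOut_pos) hxf rfl

variable (Φ : 𝓢(E, ℂ) ≃* 𝓢(E, ℂ))

theorem tsupport_map_subset_tsupport_map_iff {f g : 𝓢(E, ℂ)} :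
    tsupport (Φ f) ⊆ tsupport (Φ g) ↔ tsupport f ⊆ tsupport g := by
  rw [tsupport_subset_iff_forall_mul_eq_zero, tsupport_subset_iff_forall_mul_eq_zero]
  refine Φ.surjective.forall.trans (forall_congr' fun h => ?_)
  rw [← map_mul, ← map_mul, map_eq_zero_iff Φ Φ.injective, map_eq_zero_iff Φ Φ.injective]

theorem supportImage_tsupport (g : 𝓢(E, ℂ)) :
    supportImage Φ (tsupport g) = tsupport (Φ g) := by
  refine (iUnion₂_subset fun f hf => ?_).antisymm (subset_iUnion₂_of_subset g subset_rfl subset_rfl)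
  exact (tsupport_map_subset_tsupport_map_iff Φ).2 hf

theorem supportImage_closedBall {c : E} (φ : ContDiffBump c) :
    supportImage Φ (closedBall c φ.rOut) = tsupport (Φ φ.toSchwartzMap) := by
  rw [← φ.tsupport_toSchwartzMap, supportImage_tsupport]

theorem isCompact_supportImage_closedBall (c : E) {r : ℝ} (hr : 0 < r) :
    IsCompact (supportImage Φ (closedBall c r)) := by
  let φ : ContDiffBump c := ⟨r / 2, r, half_pos hr, half_lt_self hr⟩
  let ψ : ContDiffBump c := ⟨r, r + 1, hr, lt_add_one r⟩
  exact supportImage_closedBall Φ φ ▸ hasCompactSupport_of_mul_eq_self (g := Φ ψ.toSchwartzMap)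
    (by rw [← map_mul, ψ.toSchwartzMap_mul_toSchwartzMap_of_rOut_le φ le_rfl])

theorem supportImage_closedBall_nonempty (c : E) {r : ℝ} (hr : 0 < r) :
    (supportImage Φ (closedBall c r)).Nonempty := by
  let φ : ContDiffBump c := ⟨r / 2, r, half_pos hr, half_lt_self hr⟩
  rw [show r = φ.rOut from rfl, supportImage_closedBall, nonempty_iff_ne_empty, Ne,
    tsupport_eq_empty_iff]
  exact fun h => φ.toSchwartzMap_ne_zero <|
    (map_eq_zero_iff Φ Φ.injective).1 (DFunLike.ext _ _ (congrFun h))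

def pointImage (x : E) : Set E :=
  ⋂ r : Ioi (0 : ℝ), supportImage Φ (closedBall x r)

theorem pointImage_nonempty (x : E) : (pointImage Φ x).Nonempty :=
  IsCompact.nonempty_iInter_of_directed_nonempty_isCompact_isClosed _
    (directed_supportImage_closedBall Φ x) (fun r => supportImage_closedBall_nonempty Φ x r.2)
    (fun r => isCompact_supportImage_closedBall Φ x r.2)
    (fun r => (isCompact_supportImage_closedBall Φ x r.2).isClosed)

theorem mem_interior_supportImage_symm {x p : E} (hp : p ∈ pointImage Φ x) {δ : ℝ} (hδ : 0 < δ) :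
    x ∈ interior (supportImage Φ.symm (closedBall p δ)) := by
  let φ : ContDiffBump p := ⟨δ / 4, δ / 2, by positivity, by linarith⟩
  let ψ : ContDiffBump p := ⟨δ / 2, δ, half_pos hδ, half_lt_self hδ⟩
  refine tsupport_map_subset_interior_supportImage Φ.symm
    (ψ.toSchwartzMap_mul_toSchwartzMap_of_rOut_le φ le_rfl)
    ψ.tsupport_toSchwartzMap.subset ?_
  by_contra hx
  obtain ⟨χ, hχ⟩ := ContDiffBump.exists_toSchwartzMap_mul_eq_zero hx
  have h0 : φ.toSchwartzMap * Φ χ.toSchwartzMap = 0 := by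
    simpa [mul_comm] using congrArg Φ hχ
  rw [mul_eq_zero_iff_disjoint_support_tsupport, ← supportImage_closedBall] at h0
  exact h0.ne_of_mem (φ.support_toSchwartzMap ▸ mem_ball_self φ.rOut_pos)
    (mem_iInter.1 hp ⟨χ.rOut, χ.rOut_pos⟩) rfl

theorem pointImage_subsingleton (x : E) : (pointImage Φ x).Subsingleton := by
  intro p hp q hq
  by_contra hpq
  have hδ : 0 < dist p q / 2 := half_pos (dist_pos.2 hpq)
  let φ : ContDiffBump p := ⟨dist p q / 4, dist p q / 2, by linarith, by linarith⟩
  let ψ : ContDiffBump q := ⟨dist p q / 4, dist p q / 2, by linarith, by linarith⟩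
  have h0 : Φ.symm φ.toSchwartzMap * Φ.symm ψ.toSchwartzMap = 0 := by
    rw [← map_mul, map_eq_zero_iff Φ.symm Φ.symm.injective, mul_eq_zero_iff_disjoint_support,
      φ.support_toSchwartzMap, ψ.support_toSchwartzMap]
    exact ball_disjoint_ball (by simp [φ, ψ])
  have hxp := mem_interior_supportImage_symm Φ hp hδ
  have hxq := mem_interior_supportImage_symm Φ hq hδ
  rw [show dist p q / 2 = φ.rOut from rfl, supportImage_closedBall] at hxp
  rw [show dist p q / 2 = ψ.rOut from rfl, supportImage_closedBall] at hxq
  exact (disjoint_interior_tsupport_of_mul_eq_zero h0).ne_of_mem hxp (interior_subset hxq) rfl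

noncomputable def pointMap (x : E) : E := (pointImage_nonempty Φ x).some

theorem pointMap_mem_pointImage (x : E) : pointMap Φ x ∈ pointImage Φ x :=
  (pointImage_nonempty Φ x).some_mem

theorem eq_pointMap_of_mem_pointImage {x p : E} (hp : p ∈ pointImage Φ x) : p = pointMap Φ x :=
  pointImage_subsingleton Φ x hp (pointMap_mem_pointImage Φ x)

theorem pointMap_symm_pointMap (x : E) : pointMap Φ.symm (pointMap Φ x) = x :=
  (eq_pointMap_of_mem_pointImage Φ.symm <| mem_iInter.2 fun r =>
    interior_subset (mem_interior_supportImage_symm Φ (pointMap_mem_pointImage Φ x) r.2)).symm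

theorem pointMap_mem_tsupport {f : 𝓢(E, ℂ)} {x : E} (hx : x ∈ tsupport f) :
    pointMap Φ x ∈ tsupport (Φ f) := by
  by_contra hp
  obtain ⟨φ, hφ⟩ := ContDiffBump.exists_toSchwartzMap_mul_eq_zero hp
  have h0 : Φ.symm φ.toSchwartzMap * f = 0 := by simpa using congrArg Φ.symm hφ
  have hx' := mem_interior_supportImage_symm Φ (pointMap_mem_pointImage Φ x) φ.rOut_pos
  rw [supportImage_closedBall] at hx'
  exact (disjoint_interior_tsupport_of_mul_eq_zero h0).ne_of_mem hx' hx rfl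

theorem image_pointMap_tsupport (f : 𝓢(E, ℂ)) : pointMap Φ '' tsupport f = tsupport (Φ f) := by
  refine (image_subset_iff.2 fun x => pointMap_mem_tsupport Φ).antisymm fun y hy =>
    ⟨pointMap Φ.symm y, ?_, ?_⟩
  · simpa using pointMap_mem_tsupport Φ.symm hy
  · exact pointMap_symm_pointMap Φ.symm y

theorem exists_supportImage_closedBall_subset_ball (x : E) {η : ℝ} (hη : 0 < η) :
    ∃ r > 0, supportImage Φ (closedBall x r) ⊆ ball (pointMap Φ x) η := by
  obtain ⟨r, hr⟩ := exists_subset_nhds_of_isCompact' (directed_supportImage_closedBall Φ x)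
    (fun r => isCompact_supportImage_closedBall Φ x r.2)
    (fun r => (isCompact_supportImage_closedBall Φ x r.2).isClosed)
    fun p hp => by rw [eq_pointMap_of_mem_pointImage Φ hp]; exact ball_mem_nhds _ hη
  exact ⟨r, r.2, hr⟩

theorem continuous_pointMap : Continuous (pointMap Φ) := by
  refine Metric.continuous_iff.2 fun x η hη => ?_
  obtain ⟨r, hr, hsub⟩ := exists_supportImage_closedBall_subset_ball Φ x hη
  refine ⟨r / 2, half_pos hr, fun y hy => hsub ?_⟩
  refine supportImage_mono Φ (closedBall_subset_closedBall' ?_)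
    (mem_iInter.1 (pointMap_mem_pointImage Φ y) ⟨r / 2, half_pos hr⟩)
  linarith [hy.le]

variable [MeasurableSpace E] [BorelSpace E] (μ : Measure E) [μ.IsAddHaarMeasure]

theorem exists_eq_convolution {f g : 𝓢(E, ℂ)} (hf : HasCompactSupport f)
    (hg : HasCompactSupport g) :
    ∃ h : 𝓢(E, ℂ), ⇑h = f ⋆[ContinuousLinearMap.mul ℝ ℂ, μ] g :=
  ⟨(hf.convolution (μ := μ) (ContinuousLinearMap.mul ℝ ℂ) hg).toSchwartzMap
    (hg.contDiff_convolution_right _ f.continuous.locallyIntegrable (g.smooth ⊤)), rfl⟩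

theorem pointMap_add
    (hconv : ∀ f g h : 𝓢(E, ℂ), ⇑h = f ⋆[ContinuousLinearMap.mul ℝ ℂ, μ] g →
      ⇑(Φ h) = Φ f ⋆[ContinuousLinearMap.mul ℝ ℂ, μ] Φ g) (x y : E) :
    pointMap Φ (x + y) = pointMap Φ x + pointMap Φ y := by
  refine eq_of_forall_dist_le fun η hη => ?_
  obtain ⟨r, hr, hrx⟩ := exists_supportImage_closedBall_subset_ball Φ x (half_pos hη)
  obtain ⟨s, hs, hsy⟩ := exists_supportImage_closedBall_subset_ball Φ y (half_pos hη)
  let φ : ContDiffBump x := ⟨r / 2, r, half_pos hr, half_lt_self hr⟩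
  let ψ : ContDiffBump y := ⟨s / 2, s, half_pos hs, half_lt_self hs⟩
  obtain ⟨h, hh⟩ := exists_eq_convolution μ φ.hasCompactSupport_toSchwartzMap
    ψ.hasCompactSupport_toSchwartzMap
  have hmem : pointMap Φ (x + y) ∈ tsupport (Φ h) := pointMap_mem_tsupport Φ <|
    subset_tsupport _ (by rw [mem_support, hh]; exact φ.convolution_toSchwartzMap_add_ne_zero μ ψ)
  have hsub : support (Φ h) ⊆ ball (pointMap Φ x + pointMap Φ y) η := by
    rw [hconv _ _ _ hh, ← add_halves η, ← ball_add_ball (half_pos hη) (half_pos hη)]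
    refine (support_convolution_subset _).trans (add_subset_add ?_ ?_)
    · exact (subset_tsupport _).trans (supportImage_closedBall Φ φ ▸ hrx)
    · exact (subset_tsupport _).trans (supportImage_closedBall Φ ψ ▸ hsy)
  exact mem_closedBall.1 ((closure_mono hsub).trans closure_ball_subset_closedBall hmem)

theorem exists_continuousLinearEquiv_image_tsupport
    (hconv : ∀ f g h : 𝓢(E, ℂ), ⇑h = f ⋆[ContinuousLinearMap.mul ℝ ℂ, μ] g →
      ⇑(Φ h) = Φ f ⋆[ContinuousLinearMap.mul ℝ ℂ, μ] Φ g) :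
    ∃ A : E ≃L[ℝ] E, ∀ f : 𝓢(E, ℂ), A '' tsupport f = tsupport (Φ f) := by
  let τ : E ≃+ E :=
    { toFun := pointMap Φ
      invFun := pointMap Φ.symm
      left_inv := pointMap_symm_pointMap Φ
      right_inv := pointMap_symm_pointMap Φ.symm
      map_add' := pointMap_add Φ μ hconv }
  exact ⟨τ.toRealLinearEquiv (continuous_pointMap Φ) (continuous_pointMap Φ.symm),
    image_pointMap_tsupport Φ⟩

end SchwartzMap

open MeasureTheory SchwartzMap Complex

theorem stmt_9_general (n : ℕ)
    (U : SchwartzMap (EuclideanSpace ℝ (Fin n)) ℂ → SchwartzMap (EuclideanSpace ℝ (Fin n)) ℂ)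
    (hUbij : Function.Bijective U)
    (h2 : ∀ f g h : SchwartzMap (EuclideanSpace ℝ (Fin n)) ℂ,
      (∀ x, h x = f x * g x) → ∀ x, U h x = U f x * U g x)
    (h3 : ∀ f g h : SchwartzMap (EuclideanSpace ℝ (Fin n)) ℂ,
      (∀ x, h x = ∫ y, f (x - y) * g y) →
      ∀ x, U h x = ∫ y, U f (x - y) * U g y) :
    ∃ A : EuclideanSpace ℝ (Fin n) ≃ₗ[ℝ] EuclideanSpace ℝ (Fin n),
      ∀ f : SchwartzMap (EuclideanSpace ℝ (Fin n)) ℂ,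
        ⇑A '' tsupport ⇑f = tsupport ⇑(U f) := by
  let Φ : 𝓢(EuclideanSpace ℝ (Fin n), ℂ) ≃* 𝓢(EuclideanSpace ℝ (Fin n), ℂ) :=
    MulEquiv.ofBijective (MulHom.mk U fun f g => SchwartzMap.ext (h2 f g (f * g) fun _ => rfl))
      hUbij
  obtain ⟨A, hA⟩ := exists_continuousLinearEquiv_image_tsupport Φ volume fun f g h hh => by
    ext x
    rw [convolution_eq_swap]
    exact h3 f g h (fun x => by rw [hh, convolution_eq_swap]; rfl) x
  exact ⟨A.toLinearEquiv, hA⟩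

theorem stmt_9 (n : ℕ)
    (U : SchwartzMap (EuclideanSpace ℝ (Fin n)) ℂ → SchwartzMap (EuclideanSpace ℝ (Fin n)) ℂ)
    (hUbij : Function.Bijective U)
    (h1 : ∀ f g h : SchwartzMap (EuclideanSpace ℝ (Fin n)) ℂ,
      (∀ x, h x = f x + starRingEnd ℂ (g x)) →
      ∀ x, U h x = U f x + starRingEnd ℂ (U g x))
    (h2 : ∀ f g h : SchwartzMap (EuclideanSpace ℝ (Fin n)) ℂ,
      (∀ x, h x = f x * g x) → ∀ x, U h x = U f x * U g x)
    (h3 : ∀ f g h : SchwartzMap (EuclideanSpace ℝ (Fin n)) ℂ,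
      (∀ x, h x = ∫ y, f (x - y) * g y) →
      ∀ x, U h x = ∫ y, U f (x - y) * U g y) :
    ∃ A : EuclideanSpace ℝ (Fin n) ≃ₗ[ℝ] EuclideanSpace ℝ (Fin n),
      ∀ f : SchwartzMap (EuclideanSpace ℝ (Fin n)) ℂ,
        ⇑A '' tsupport ⇑f = tsupport ⇑(U f) :=
  stmt_9_general n U hUbij h2 h3
end

section
/- Let U : S(ℝⁿ) → S(ℝⁿ) be a bijection satisfying, for all f, g ∈ S(ℝⁿ): (1) U(f + ḡ) = U(f) + conj(U(g)), (2) U(f·g) = U(f)·U(g), (3) U(f ∗ g) = U(f) ∗ U(g), and let m : ℂ → ℂ satisfy U(c·f) = m(c) · Uf for all c ∈ ℂ and f ∈ S(ℝⁿ). Then m is injective, m(ab) = m(a)m(b) for all a, b ∈ ℂ, m(a + b̄) = m(a) + conj(m(b)) for all a, b ∈ ℂ, and in particular m(ā) = conj(m(a)) for all a ∈ ℂ. -/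
open SchwartzMap Complex
open scoped ComplexConjugate

/-!
Fix a real-valued Schwartz function `f ≠ 0` and a point `x` with `U f x ≠ 0`; by injectivity
of `U` such a point exists. Then `c ↦ U (c • f) x = m c * U f x` determines `m`. Since
`(a * b) • f = a • (b • f)`, `m` is multiplicative; since `f` is real,
`(a + b̄) • f = a • f + conj (b • f)`, and the conjugate-additivity of `U` gives the additive law
once `U f x` is known to be real, which is the case `a = 0`, `b = 1` of the same identity.
-/

theorem SchwartzMap.exists_ne_zero_conj_eq (E : Type*) [NormedAddCommGroup E] [NormedSpace ℝ E]
    [FiniteDimensional ℝ E] [HasContDiffBump E] :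
    ∃ f : 𝓢(E, ℂ), f ≠ 0 ∧ ∀ x, conj (f x) = f x := by
  let b : ContDiffBump (0 : E) := ⟨1, 2, one_pos, one_lt_two⟩
  let f : 𝓢(E, ℂ) := (b.hasCompactSupport.comp_left ofReal_zero).toSchwartzMap
    (ofRealCLM.contDiff.comp b.contDiff)
  have hf0 : f 0 = 1 := by
    change ((b 0 : ℝ) : ℂ) = 1
    rw [b.one_of_mem_closedBall (Metric.mem_closedBall_self b.rIn_pos.le), ofReal_one]
  exact ⟨f, fun hf => by simp [hf] at hf0, fun x => conj_ofReal _⟩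

section Multiplier

variable {E : Type*} [NormedAddCommGroup E] [NormedSpace ℝ E]

def IsConjAdditive (U : 𝓢(E, ℂ) → 𝓢(E, ℂ)) : Prop :=
  ∀ f g h : 𝓢(E, ℂ), (∀ x, h x = f x + conj (g x)) → ∀ x, U h x = U f x + conj (U g x)

def IsMultiplier (U : 𝓢(E, ℂ) → 𝓢(E, ℂ)) (m : ℂ → ℂ) : Prop :=
  ∀ (c : ℂ) (f : 𝓢(E, ℂ)) (x : E), U (c • f) x = m c * U f x

variable {U : 𝓢(E, ℂ) → 𝓢(E, ℂ)} {m : ℂ → ℂ} {f : 𝓢(E, ℂ)} {x : E}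

theorem IsConjAdditive.map_zero (hU : IsConjAdditive U) : U 0 = 0 := by
  ext x
  have h : U 0 x = U 0 x + conj (U 0 x) := hU 0 0 0 (fun _ => by simp) x
  simpa using congrArg conj (left_eq_add.mp h)

namespace IsMultiplier

theorem map_zero (hm : IsMultiplier U m) (hU : IsConjAdditive U) (hx : U f x ≠ 0) : m 0 = 0 := by
  have h := hm 0 f x
  rw [zero_smul, hU.map_zero, zero_apply, eq_comm] at h
  exact (mul_eq_zero.mp h).resolve_right hx

theorem map_one (hm : IsMultiplier U m) (hx : U f x ≠ 0) : m 1 = 1 :=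
  mul_right_cancel₀ hx (by rw [← hm, one_smul, one_mul])

theorem map_mul (hm : IsMultiplier U m) (hx : U f x ≠ 0) (a b : ℂ) : m (a * b) = m a * m b :=
  mul_right_cancel₀ hx (by rw [← hm, mul_smul, hm, hm, mul_assoc])

theorem map_add_conj (hm : IsMultiplier U m) (hU : IsConjAdditive U)
    (hf : ∀ y, conj (f y) = f y) (hx : U f x ≠ 0) (a b : ℂ) :
    m (a + conj b) = m a + conj (m b) := by
  have key : ∀ a b : ℂ, m (a + conj b) * U f x = m a * U f x + conj (m b * U f x) := by
    intro a b
    rw [← hm, ← hm, ← hm]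
    exact hU _ _ _ (fun y => by simp only [smul_apply, smul_eq_mul, _root_.map_mul, hf]; ring) x
  have hreal : conj (U f x) = U f x := by
    simpa [hm.map_zero hU hx, hm.map_one hx] using (key 0 1).symm
  exact mul_right_cancel₀ hx (by rw [key, _root_.map_mul, hreal, add_mul])

theorem map_conj (hm : IsMultiplier U m) (hU : IsConjAdditive U)
    (hf : ∀ y, conj (f y) = f y) (hx : U f x ≠ 0) (a : ℂ) : m (conj a) = conj (m a) := by
  simpa [hm.map_zero hU hx] using hm.map_add_conj hU hf hx 0 a

theorem injective (hm : IsMultiplier U m) (hU : Function.Injective U) (hf : f ≠ 0) :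
    Function.Injective m := fun a b hab =>
  smul_left_injective ℂ hf <| hU <| SchwartzMap.ext fun x => by rw [hm, hm, hab]

end IsMultiplier

end Multiplier

theorem stmt_11_general (n : ℕ)
    (U : SchwartzMap (EuclideanSpace ℝ (Fin n)) ℂ → SchwartzMap (EuclideanSpace ℝ (Fin n)) ℂ)
    (hUbij : Function.Bijective U)
    (h1 : ∀ f g h : SchwartzMap (EuclideanSpace ℝ (Fin n)) ℂ,
      (∀ x, h x = f x + starRingEnd ℂ (g x)) →
      ∀ x, U h x = U f x + starRingEnd ℂ (U g x))
    (m : ℂ → ℂ)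
    (hm : ∀ (c : ℂ) (f : SchwartzMap (EuclideanSpace ℝ (Fin n)) ℂ)
      (x : EuclideanSpace ℝ (Fin n)), U (c • f) x = m c * U f x) :
    Function.Injective m ∧
    (∀ a b : ℂ, m (a * b) = m a * m b) ∧
    (∀ a b : ℂ, m (a + starRingEnd ℂ b) = m a + starRingEnd ℂ (m b)) ∧
    (∀ a : ℂ, m (starRingEnd ℂ a) = starRingEnd ℂ (m a)) := by
  have hU : IsConjAdditive U := h1
  have hm : IsMultiplier U m := hm
  obtain ⟨f, hf, hreal⟩ := SchwartzMap.exists_ne_zero_conj_eq (EuclideanSpace ℝ (Fin n))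
  obtain ⟨x, hx⟩ : ∃ x, U f x ≠ 0 := DFunLike.ne_iff.mp fun hUf =>
    hf (hUbij.injective (hUf.trans hU.map_zero.symm))
  exact ⟨hm.injective hUbij.injective hf, hm.map_mul hx, hm.map_add_conj hU hreal hx,
    hm.map_conj hU hreal hx⟩

theorem stmt_11 (n : ℕ)
    (U : SchwartzMap (EuclideanSpace ℝ (Fin n)) ℂ → SchwartzMap (EuclideanSpace ℝ (Fin n)) ℂ)
    (hUbij : Function.Bijective U)
    (h1 : ∀ f g h : SchwartzMap (EuclideanSpace ℝ (Fin n)) ℂ,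
      (∀ x, h x = f x + starRingEnd ℂ (g x)) →
      ∀ x, U h x = U f x + starRingEnd ℂ (U g x))
    (h2 : ∀ f g h : SchwartzMap (EuclideanSpace ℝ (Fin n)) ℂ,
      (∀ x, h x = f x * g x) → ∀ x, U h x = U f x * U g x)
    (h3 : ∀ f g h : SchwartzMap (EuclideanSpace ℝ (Fin n)) ℂ,
      (∀ x, h x = ∫ y, f (x - y) * g y) →
      ∀ x, U h x = ∫ y, U f (x - y) * U g y)
    (m : ℂ → ℂ)
    (hm : ∀ (c : ℂ) (f : SchwartzMap (EuclideanSpace ℝ (Fin n)) ℂ)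
      (x : EuclideanSpace ℝ (Fin n)), U (c • f) x = m c * U f x) :
    Function.Injective m ∧
    (∀ a b : ℂ, m (a * b) = m a * m b) ∧
    (∀ a b : ℂ, m (a + starRingEnd ℂ b) = m a + starRingEnd ℂ (m b)) ∧
    (∀ a : ℂ, m (starRingEnd ℂ a) = starRingEnd ℂ (m a)) :=
  stmt_11_general n U hUbij h1 m hm
end
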